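/- arXiv:1406.0670 — 5 statements merged into one kernel-verified Lean document; each statement's English description precedes it below -/
import Mathlib

section
/- For every n ≥ 0 the infinite Fibonacci word f has exactly one right-special factor of length n, and this unique right-special factor of length n is the reversal of the prefix f[0..n-1]. -/
/-!
Closure of the factors under reversal turns right special factors into left special ones
(`0x` and `1x` both factors), so it suffices to show that the left special factors are exactly
the prefixes of `f`.

Prefixes are left special: `φ^(k+1)(0) = p_k ab` with `p_k` a palindromic prefix and `ab`
alternating between `01` and `10`, so reversing it exhibits both `0 p_k` and `1 p_k` as factors
(the palindromes `p_k` also give closure under reversal).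

Conversely, cut `f = φ(f)` into blocks `φ(f_m) ∈ {01, 0}`: every `0` starts a block and every
`1` ends one. A nonempty left special `x` therefore starts at a block boundary in both occurrences,
and ends at one once a final lone `0` is dropped. Since `φ` is injective on binary words both
occurrences have the same preimage `v`, which is again left special and shorter, hence a prefix
by induction; then `x`, being `φ(v)` possibly followed by `0`, is a prefix too.
-/

/-- The Fibonacci morphism φ: 0 ↦ 01, 1 ↦ 0. -/
def fibPhi (w : List ℕ) : List ℕ := (w.map (fun c => if c = 0 then [0, 1] else [0])).flatten

/-- The infinite Fibonacci word f = 0100101001001⋯, the fixed point of φ starting with 0. -/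
def fibWord (i : ℕ) : ℕ := ((fibPhi^[i + 2]) [0]).getD i 0

/-- A finite word is a factor of the infinite Fibonacci word. -/
def IsFibFactor (x : List ℕ) : Prop :=
  ∃ i : ℕ, x = (List.range x.length).map (fun t => fibWord (i + t))

/-- The prefix of the Fibonacci word of length n. -/
def fibPrefix (n : ℕ) : List ℕ := (List.range n).map fibWord

lemma fibPhi_cons (c : ℕ) (w : List ℕ) :
    fibPhi (c :: w) = (if c = 0 then [0, 1] else [0]) ++ fibPhi w := by
  simp [fibPhi]

lemma fibPhi_append (u v : List ℕ) : fibPhi (u ++ v) = fibPhi u ++ fibPhi v := by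
  simp [fibPhi]

lemma List.IsPrefix.fibPhi {u v : List ℕ} (h : u <+: v) : fibPhi u <+: fibPhi v := by
  obtain ⟨w, rfl⟩ := h
  exact ⟨_root_.fibPhi w, (fibPhi_append u w).symm⟩

lemma length_fibPhi (w : List ℕ) : (fibPhi w).length = w.length + w.count 0 := by
  induction w with
  | nil => rfl
  | cons c w ih =>
    rw [fibPhi_cons, List.length_append, ih, List.count_cons]
    split_ifs <;> simp_all <;> omega

lemma zero_mem_of_one_mem_fibPhi {w : List ℕ} (h : 1 ∈ fibPhi w) : 0 ∈ w := by
  simp only [fibPhi, List.mem_flatten, List.mem_map] at h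
  obtain ⟨_, ⟨c, hc, rfl⟩, h1⟩ := h
  by_cases c0 : c = 0
  · exact c0 ▸ hc
  · simp [c0] at h1

lemma fibPhi_ne_one_cons (w u : List ℕ) : fibPhi w ≠ 1 :: u := by
  cases w with
  | nil => simp [fibPhi]
  | cons c w => rw [fibPhi_cons]; split_ifs <;> simp

lemma fibPhi_injOn : Set.InjOn fibPhi {w | ∀ a ∈ w, a ≤ 1} := by
  intro u hu v hv h
  induction u generalizing v with
  | nil =>
    cases v with
    | nil => rfl
    | cons b v => rw [fibPhi_cons] at h; split_ifs at h <;> simp [fibPhi] at h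
  | cons a u ih =>
    cases v with
    | nil => rw [fibPhi_cons] at h; split_ifs at h <;> simp [fibPhi] at h
    | cons b v =>
      have ha := hu a (by simp)
      have hb := hv b (by simp)
      rw [fibPhi_cons, fibPhi_cons] at h
      interval_cases a <;> interval_cases b <;> simp at h
      · rw [ih (by simp_all) (by simp_all) h]
      · exact absurd h.symm (fibPhi_ne_one_cons _ _)
      · exact absurd h (fibPhi_ne_one_cons _ _)
      · rw [ih (by simp_all) (by simp_all) h]

def fibStd (k : ℕ) : List ℕ := fibPhi^[k] [0]

lemma fibStd_succ (k : ℕ) : fibStd (k + 1) = fibPhi (fibStd k) :=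
  Function.iterate_succ_apply' _ _ _

lemma fibStd_add_two (k : ℕ) : fibStd (k + 2) = fibStd (k + 1) ++ fibStd k := by
  induction k with
  | zero => rfl
  | succ k ih =>
    conv_lhs => rw [fibStd_succ (k + 2), ih, fibPhi_append, ← fibStd_succ, ← fibStd_succ]

lemma fibStd_isPrefix_succ (k : ℕ) : fibStd k <+: fibStd (k + 1) := by
  induction k with
  | zero => exact ⟨[1], rfl⟩
  | succ k ih => rw [fibStd_succ, fibStd_succ (k + 1)]; exact ih.fibPhi

lemma fibStd_isPrefix_of_le {k l : ℕ} (h : k ≤ l) : fibStd k <+: fibStd l := by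
  induction h with
  | refl => exact List.prefix_refl _
  | step _ ih => exact ih.trans (fibStd_isPrefix_succ _)

lemma lt_length_fibStd (k : ℕ) : k < (fibStd k).length := by
  induction k using Nat.strong_induction_on with
  | _ k ih =>
    match k with
    | 0 | 1 => decide
    | k + 2 =>
      have := ih (k + 1) (by omega)
      have := ih k (by omega)
      rw [fibStd_add_two, List.length_append]
      omega

def fibWindow (i n : ℕ) : List ℕ := (List.range n).map (fun t => fibWord (i + t))

@[simp] lemma length_fibWindow (i n : ℕ) : (fibWindow i n).length = n := by simp [fibWindow]

lemma fibWindow_succ (i n : ℕ) : fibWindow i (n + 1) = fibWord i :: fibWindow (i + 1) n := by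
  simp [fibWindow, List.range_succ_eq_map, Function.comp_def, Nat.add_assoc, Nat.add_comm 1]

lemma fibWindow_one (i : ℕ) : fibWindow i 1 = [fibWord i] := rfl

lemma fibWindow_add (i m n : ℕ) : fibWindow i (m + n) = fibWindow i m ++ fibWindow (i + m) n := by
  simp [fibWindow, List.range_add, Function.comp_def, Nat.add_assoc]

lemma isFibFactor_fibWindow (i n : ℕ) : IsFibFactor (fibWindow i n) :=
  ⟨i, by simp [fibWindow]⟩

lemma isFibFactor_cons_iff {c : ℕ} {x : List ℕ} :
    IsFibFactor (c :: x) ↔ ∃ i, fibWord i = c ∧ x = fibWindow (i + 1) x.length := by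
  change (∃ i, c :: x = fibWindow i (x.length + 1)) ↔ _
  simp [fibWindow_succ, eq_comm]

@[simp] lemma length_fibPrefix (n : ℕ) : (fibPrefix n).length = n := by simp [fibPrefix]

lemma fibPrefix_add (m n : ℕ) : fibPrefix (m + n) = fibPrefix m ++ fibWindow m n := by
  simp [fibPrefix, fibWindow, List.range_add, Function.comp_def]

lemma fibPrefix_succ (n : ℕ) : fibPrefix (n + 1) = fibPrefix n ++ [fibWord n] := by
  simp [fibPrefix_add, fibWindow]

lemma fibPrefix_isPrefix_of_le {m n : ℕ} (h : m ≤ n) : fibPrefix m <+: fibPrefix n := by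
  obtain ⟨k, rfl⟩ := Nat.exists_eq_add_of_le h
  exact ⟨_, (fibPrefix_add m k).symm⟩

lemma List.IsPrefix.eq_fibPrefix {u : List ℕ} {n : ℕ} (h : u <+: fibPrefix n) :
    u = fibPrefix u.length := by
  have hle : u.length ≤ n := by simpa using h.length_le
  rw [List.prefix_iff_eq_take.1 h]
  simp [fibPrefix, ← List.map_take, List.take_range, hle]

lemma fibStd_eq_fibPrefix (k : ℕ) : fibStd k = fibPrefix (fibStd k).length := by
  refine List.ext_getElem (by simp) fun i hk _ => ?_
  have hi : i < (fibStd (i + 2)).length := by have := lt_length_fibStd (i + 2); omega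
  have hcomm : (fibStd k)[i] = (fibStd (i + 2))[i] := by
    rcases le_total k (i + 2) with h | h
    · exact (fibStd_isPrefix_of_le h).getElem hk
    · exact ((fibStd_isPrefix_of_le h).getElem hi).symm
  rw [hcomm]
  simp only [fibPrefix, List.getElem_map, List.getElem_range]
  show _ = (fibStd (i + 2)).getD i 0
  rw [List.getD_eq_getElem?_getD, List.getElem?_eq_getElem hi, Option.getD_some]

lemma isFibFactor_iff_infix {x : List ℕ} : IsFibFactor x ↔ ∃ n, x <:+: fibPrefix n := by
  constructor
  · rintro ⟨i, hx : x = fibWindow i x.length⟩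
    refine ⟨i + x.length, (List.suffix_append (fibPrefix i) x).isInfix.trans ?_⟩
    rw [fibPrefix_add, ← hx]
  · rintro ⟨n, s, t, hst⟩
    refine ⟨s.length, ?_⟩
    have hn : n = s.length + x.length + t.length := by
      simpa [← hst, Nat.add_assoc] using (length_fibPrefix n).symm
    rw [hn, fibPrefix_add, fibPrefix_add] at hst
    exact List.append_inj_right (List.append_inj_left' hst (by simp)) (by simp)

lemma isFibFactor_fibPrefix (n : ℕ) : IsFibFactor (fibPrefix n) :=
  isFibFactor_iff_infix.2 ⟨n, List.infix_refl _⟩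

lemma IsFibFactor.of_infix {x y : List ℕ} (hy : IsFibFactor y) (h : x <:+: y) :
    IsFibFactor x := by
  obtain ⟨n, hn⟩ := isFibFactor_iff_infix.1 hy
  exact isFibFactor_iff_infix.2 ⟨n, h.trans hn⟩

/-- The position at which `φ` of the letter `f_m` starts in `f = φ(f)`. -/
def fibBlockStart (m : ℕ) : ℕ := (fibPhi (fibPrefix m)).length

lemma fibPhi_fibPrefix (m : ℕ) : fibPhi (fibPrefix m) = fibPrefix (fibBlockStart m) := by
  have hm : fibPrefix m <+: fibStd m := by
    rw [fibStd_eq_fibPrefix]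
    exact fibPrefix_isPrefix_of_le (lt_length_fibStd m).le
  have h := hm.fibPhi
  rw [← fibStd_succ, fibStd_eq_fibPrefix] at h
  exact h.eq_fibPrefix

lemma fibBlockStart_add (m k : ℕ) :
    fibBlockStart (m + k) = fibBlockStart m + (fibPhi (fibWindow m k)).length := by
  simp [fibBlockStart, fibPrefix_add, fibPhi_append]

lemma fibPhi_fibWindow (m k : ℕ) :
    fibPhi (fibWindow m k) = fibWindow (fibBlockStart m) (fibPhi (fibWindow m k)).length := by
  have h := fibPhi_fibPrefix (m + k)
  rw [fibPrefix_add, fibPhi_append, fibPhi_fibPrefix, fibBlockStart_add, fibPrefix_add] at h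
  exact List.append_cancel_left h

@[simp] lemma fibBlockStart_zero : fibBlockStart 0 = 0 := rfl

lemma fibBlockStart_succ (m : ℕ) :
    fibBlockStart (m + 1) = fibBlockStart m + if fibWord m = 0 then 2 else 1 := by
  rw [fibBlockStart_add, fibWindow_one, fibPhi_cons]
  split_ifs <;> rfl

lemma fibWindow_fibBlockStart (m : ℕ) :
    fibWindow (fibBlockStart m) (if fibWord m = 0 then 2 else 1) =
      if fibWord m = 0 then [0, 1] else [0] := by
  have h := fibPhi_fibWindow m 1
  rw [fibWindow_one, fibPhi_cons] at h
  split_ifs at h ⊢ <;> exact h.symm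

lemma fibWord_fibBlockStart (m : ℕ) : fibWord (fibBlockStart m) = 0 := by
  have h := fibWindow_fibBlockStart m
  split_ifs at h <;> simp [fibWindow_succ] at h <;> exact h.1

lemma fibWord_fibBlockStart_add_one {m : ℕ} (hm : fibWord m = 0) :
    fibWord (fibBlockStart m + 1) = 1 := by
  have h := fibWindow_fibBlockStart m
  simp [hm, fibWindow_succ] at h
  exact h.2.1

lemma strictMono_fibBlockStart : StrictMono fibBlockStart :=
  strictMono_nat_of_lt_succ fun m => by rw [fibBlockStart_succ]; split_ifs <;> omega

lemma fibBlockStart_succ_of_fibWord_eq_zero {m : ℕ} (hm : fibWord m = 0) :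
    fibBlockStart (m + 1) = fibBlockStart m + 2 := by
  rw [fibBlockStart_succ, if_pos hm]

lemma exists_fibBlockStart_eq (j : ℕ) :
    ∃ m, j = fibBlockStart m ∨ fibWord m = 0 ∧ j = fibBlockStart m + 1 := by
  induction j with
  | zero => exact ⟨0, .inl rfl⟩
  | succ j ih =>
    obtain ⟨m, rfl | ⟨hm, rfl⟩⟩ := ih
    · by_cases hm : fibWord m = 0
      · exact ⟨m, .inr ⟨hm, rfl⟩⟩
      · exact ⟨m + 1, .inl (by rw [fibBlockStart_succ, if_neg hm])⟩
    · exact ⟨m + 1, .inl (by rw [fibBlockStart_succ_of_fibWord_eq_zero hm])⟩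

lemma fibWord_le_one (j : ℕ) : fibWord j ≤ 1 := by
  obtain ⟨m, rfl | ⟨hm, rfl⟩⟩ := exists_fibBlockStart_eq j
  · simp [fibWord_fibBlockStart]
  · simp [fibWord_fibBlockStart_add_one hm]

lemma exists_fibBlockStart_eq_of_fibWord_eq_zero {j : ℕ} (hj : fibWord j = 0) :
    ∃ m, j = fibBlockStart m := by
  obtain ⟨m, h | ⟨hm, rfl⟩⟩ := exists_fibBlockStart_eq j
  · exact ⟨m, h⟩
  · simp [fibWord_fibBlockStart_add_one hm] at hj

lemma exists_fibBlockStart_eq_of_fibWord_eq_one {j : ℕ} (hj : fibWord j = 1) :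
    ∃ m, fibWord m = 0 ∧ j + 1 = fibBlockStart (m + 1) := by
  obtain ⟨m, rfl | ⟨hm, rfl⟩⟩ := exists_fibBlockStart_eq j
  · simp [fibWord_fibBlockStart] at hj
  · exact ⟨m, hm, (fibBlockStart_succ_of_fibWord_eq_zero hm).symm⟩

lemma fibWindow_le_one {i n a : ℕ} (h : a ∈ fibWindow i n) : a ≤ 1 := by
  obtain ⟨t, -, rfl⟩ := List.mem_map.1 h
  exact fibWord_le_one _

lemma exists_fibPhi_fibWindow_eq {c N m : ℕ} (h : fibBlockStart c + N = fibBlockStart m) :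
    ∃ k, fibWindow (fibBlockStart c) N = fibPhi (fibWindow c k) := by
  obtain ⟨k, rfl⟩ := Nat.exists_eq_add_of_le
    ((strictMono_fibBlockStart.le_iff_le (a := c) (b := m)).1 (by omega))
  rw [fibBlockStart_add] at h
  exact ⟨k, by rw [fibPhi_fibWindow c k]; congr 1; omega⟩

def IsFibLeftSpecial (x : List ℕ) : Prop := IsFibFactor (0 :: x) ∧ IsFibFactor (1 :: x)

lemma IsFibLeftSpecial.exists_occurrences {x : List ℕ} (hx : IsFibLeftSpecial x)
    (hne : x ≠ []) :
    ∃ a b, fibWord a = 0 ∧ fibWord b = 1 ∧ x = fibWindow (fibBlockStart (a + 1)) x.length ∧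
      x = fibWindow (fibBlockStart (b + 1)) x.length := by
  obtain ⟨i, hi, hxi⟩ := isFibFactor_cons_iff.1 hx.1
  obtain ⟨i', hi', hxi'⟩ := isFibFactor_cons_iff.1 hx.2
  obtain ⟨a, ha, hia⟩ := exists_fibBlockStart_eq_of_fibWord_eq_one hi'
  rw [hia] at hxi'
  have hhead : fibWord (i + 1) = 0 := by
    obtain ⟨n, hn⟩ := Nat.exists_eq_succ_of_ne_zero (List.length_pos_iff.2 hne).ne'
    have h := hxi.symm.trans hxi'
    rw [hn, fibWindow_succ, fibWindow_succ] at h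
    rw [(List.cons.inj h).1, fibWord_fibBlockStart]
  obtain ⟨m, hm⟩ := exists_fibBlockStart_eq_of_fibWord_eq_zero hhead
  obtain ⟨b, rfl⟩ : ∃ b, m = b + 1 :=
    Nat.exists_eq_succ_of_ne_zero (by rintro rfl; simp at hm)
  refine ⟨a, b, ha, ?_, hxi', hm ▸ hxi⟩
  rcases Nat.le_one_iff_eq_zero_or_eq_one.1 (fibWord_le_one b) with hb | hb
  · rw [fibBlockStart_succ_of_fibWord_eq_zero hb] at hm
    rw [show i = fibBlockStart b + 1 by omega, fibWord_fibBlockStart_add_one hb] at hi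
    exact absurd hi one_ne_zero
  · exact hb

/-- Desubstitution: both occurrences give a preimage under `φ`, and these coincide since `φ` is
injective on binary words. -/
lemma exists_isFibLeftSpecial_fibPhi_eq {y : List ℕ} {a b : ℕ} (ha : fibWord a = 0)
    (hb : fibWord b = 1) (hya : y = fibWindow (fibBlockStart (a + 1)) y.length)
    (hyb : y = fibWindow (fibBlockStart (b + 1)) y.length)
    (hea : ∃ m, fibBlockStart (a + 1) + y.length = fibBlockStart m)
    (heb : ∃ m, fibBlockStart (b + 1) + y.length = fibBlockStart m) :
    ∃ v, IsFibLeftSpecial v ∧ y = fibPhi v := by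
  obtain ⟨m, hm⟩ := hea
  obtain ⟨m', hm'⟩ := heb
  obtain ⟨k, hk⟩ := exists_fibPhi_fibWindow_eq hm
  obtain ⟨k', hk'⟩ := exists_fibPhi_fibWindow_eq hm'
  have hv : fibWindow (a + 1) k = fibWindow (b + 1) k' :=
    fibPhi_injOn (fun _ => fibWindow_le_one) (fun _ => fibWindow_le_one)
      (hk.symm.trans (hya.symm.trans (hyb.trans hk')))
  refine ⟨fibWindow (a + 1) k, ⟨?_, ?_⟩, hya.trans hk⟩
  · simpa [fibWindow_succ, ha] using isFibFactor_fibWindow a (k + 1)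
  · simpa [fibWindow_succ, hb, hv] using isFibFactor_fibWindow b (k' + 1)

theorem IsFibLeftSpecial.eq_fibPrefix {x : List ℕ} (hx : IsFibLeftSpecial x) :
    x = fibPrefix x.length := by
  induction hn : x.length using Nat.strong_induction_on generalizing x with
  | _ n ih =>
  subst hn
  rcases x.eq_nil_or_concat' with rfl | ⟨z, e, rfl⟩
  · rfl
  have ih' (v : List ℕ) (hv : IsFibLeftSpecial v) (hlt : v.length < (z ++ [e]).length) :
      v = fibPrefix v.length := ih _ hlt hv rfl
  obtain ⟨a, b, ha, hb, hxa, hxb⟩ := hx.exists_occurrences (by simp)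
  have hsplit (c : ℕ) (h : z ++ [e] = fibWindow c (z ++ [e]).length) :
      z = fibWindow c z.length ∧ fibWord (c + z.length) = e := by
    rw [List.length_append, List.length_singleton, fibWindow_add, fibWindow_one] at h
    simpa [eq_comm] using List.append_inj h (by simp)
  obtain ⟨hza, hea⟩ := hsplit _ hxa
  obtain ⟨hzb, heb⟩ := hsplit _ hxb
  -- A final `0` starts a block and a final `1` ends one: cut `x` at that block boundary.
  rcases Nat.le_one_iff_eq_zero_or_eq_one.1 (hea ▸ fibWord_le_one _) with rfl | rfl
  · obtain ⟨v, hv, rfl⟩ := exists_isFibLeftSpecial_fibPhi_eq ha hb hza hzb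
      (exists_fibBlockStart_eq_of_fibWord_eq_zero hea)
      (exists_fibBlockStart_eq_of_fibWord_eq_zero heb)
    have hlt : v.length < (fibPhi v ++ [0]).length := by simp [length_fibPhi]
    rw [ih' v hv hlt, fibPhi_fibPrefix, ← fibWord_fibBlockStart v.length,
      ← fibPrefix_succ, length_fibPrefix]
  · have hend (c : ℕ) (h : fibWord (c + z.length) = 1) :
        ∃ m, c + (z ++ [1]).length = fibBlockStart m := by
      obtain ⟨m, -, hm⟩ := exists_fibBlockStart_eq_of_fibWord_eq_one h
      exact ⟨m + 1, by simpa [← Nat.add_assoc] using hm⟩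
    obtain ⟨v, hv, hxv⟩ :=
      exists_isFibLeftSpecial_fibPhi_eq ha hb hxa hxb (hend _ hea) (hend _ heb)
    have h0 : 0 ∈ v := zero_mem_of_one_mem_fibPhi (by simp [← hxv])
    have hlt : v.length < (z ++ [1]).length := by
      rw [hxv, length_fibPhi]; have := List.count_pos_iff.2 h0; omega
    rw [hxv, ih' v hv (hxv ▸ hlt), fibPhi_fibPrefix, length_fibPrefix]

/-- The palindromic prefixes: `fibStd (k + 1)` with its last two letters removed. -/
def fibPal : ℕ → List ℕ
  | 0 => []
  | k + 1 => fibStd k ++ fibPal k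

lemma fibPal_add_two (k : ℕ) : fibPal (k + 2) = fibStd (k + 2) ++ fibPal k := by
  rw [fibPal, fibPal, fibStd_add_two, List.append_assoc]

lemma fibStd_succ_eq_fibPal_append (k : ℕ) :
    fibStd (k + 1) = fibPal k ++ [k % 2, (k + 1) % 2] := by
  induction k using Nat.strong_induction_on with
  | _ k ih =>
    match k with
    | 0 | 1 => rfl
    | k + 2 =>
      have h1 : (k + 2) % 2 = k % 2 := by omega
      have h2 : (k + 2 + 1) % 2 = (k + 1) % 2 := by omega
      rw [show k + 2 + 1 = k + 1 + 2 by rfl, fibStd_add_two, ih k (by omega), fibPal_add_two,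
        h1, h2, List.append_assoc]

lemma fibPal_reverse (k : ℕ) : (fibPal k).reverse = fibPal k := by
  induction k using Nat.strong_induction_on with
  | _ k ih =>
    match k with
    | 0 | 1 => rfl
    | k + 2 =>
      conv_lhs => rw [fibPal, List.reverse_append, ih (k + 1) (by omega),
        fibStd_succ_eq_fibPal_append, List.reverse_append, ih k (by omega)]
      rw [fibPal_add_two, fibStd_succ_eq_fibPal_append (k + 1)]
      simp only [List.reverse_cons, List.reverse_nil, List.nil_append, List.append_assoc,
        List.cons_append]
      rw [show (k + 1 + 1) % 2 = k % 2 by omega]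

lemma fibPal_eq_fibPrefix (k : ℕ) : fibPal k = fibPrefix (fibPal k).length := by
  have h : fibPal k <+: fibPrefix (fibStd (k + 1)).length := by
    rw [← fibStd_eq_fibPrefix, fibStd_succ_eq_fibPal_append]
    exact List.prefix_append _ _
  exact h.eq_fibPrefix

lemma le_length_fibPal (k : ℕ) : k ≤ (fibPal k).length := by
  have h := congrArg List.length (fibStd_succ_eq_fibPal_append k)
  have := lt_length_fibStd (k + 1)
  simp only [List.length_append, List.length_cons, List.length_nil] at h
  omega

lemma fibPrefix_isPrefix_fibPal {n k : ℕ} (h : n ≤ k) : fibPrefix n <+: fibPal k := by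
  rw [fibPal_eq_fibPrefix]
  exact fibPrefix_isPrefix_of_le (h.trans (le_length_fibPal k))

/-- Every factor lies in a palindromic prefix. -/
lemma IsFibFactor.reverse {x : List ℕ} (hx : IsFibFactor x) : IsFibFactor x.reverse := by
  obtain ⟨n, hn⟩ := isFibFactor_iff_infix.1 hx
  have h : x.reverse <:+: fibPal n := by
    rw [← fibPal_reverse, List.reverse_infix]
    exact hn.trans (fibPrefix_isPrefix_fibPal le_rfl).isInfix
  rw [fibPal_eq_fibPrefix] at h
  exact isFibFactor_iff_infix.2 ⟨_, h⟩

lemma isFibFactor_reverse_iff {x : List ℕ} : IsFibFactor x.reverse ↔ IsFibFactor x :=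
  ⟨fun h => x.reverse_reverse ▸ h.reverse, IsFibFactor.reverse⟩

/-- Reversing the prefix `fibPal j ++ [j % 2, (j + 1) % 2]` shows that `j % 2 :: fibPal j` is
a factor. -/
lemma isFibFactor_mod_two_cons_fibPrefix (k n : ℕ) : IsFibFactor (k % 2 :: fibPrefix n) := by
  set j := k + 2 * n
  have hstd := (isFibFactor_fibPrefix (fibStd (j + 1)).length).reverse
  rw [← fibStd_eq_fibPrefix, fibStd_succ_eq_fibPal_append, List.reverse_append,
    fibPal_reverse] at hstd
  refine hstd.of_infix (List.infix_cons ?_)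
  have hj : j % 2 = k % 2 := by omega
  simpa [hj] using ((List.prefix_cons_inj _).2 (fibPrefix_isPrefix_fibPal (by omega))).isInfix

lemma isFibLeftSpecial_fibPrefix (n : ℕ) : IsFibLeftSpecial (fibPrefix n) :=
  ⟨isFibFactor_mod_two_cons_fibPrefix 0 n, isFibFactor_mod_two_cons_fibPrefix 1 n⟩

/-- For every n, the unique right-special factor of length n of the Fibonacci
word is the reversal of its length-n prefix: a word x of length n satisfies
that both x0 and x1 are factors iff x is the reversed prefix. -/
theorem fibWord_right_special :
    ∀ (n : ℕ) (x : List ℕ),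
      (x.length = n ∧ IsFibFactor (x ++ [0]) ∧ IsFibFactor (x ++ [1])) ↔
        x = (fibPrefix n).reverse := by
  intro n x
  have hrs :
      (IsFibFactor (x ++ [0]) ∧ IsFibFactor (x ++ [1])) ↔ IsFibLeftSpecial x.reverse := by
    simp [IsFibLeftSpecial, ← isFibFactor_reverse_iff (x := x ++ _)]
  rw [hrs]
  constructor
  · rintro ⟨rfl, hx⟩
    rw [← List.length_reverse, ← hx.eq_fibPrefix, List.reverse_reverse]
  · rintro rfl
    simpa using isFibLeftSpecial_fibPrefix n
end

section
/- For n ≥ 1, the length-n prefix f[0..n-1] of the infinite Fibonacci word f is a quasiperiod of f if and only if n is not of the form F_m − 1 for some m ≥ 3 (i.e., n ∉ {1, 2, 4, 7, 12, 20, …}). -/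
def fibW (n : ℕ) : List ℕ := fibPhi^[n] [0]

lemma fibW_succ (n : ℕ) : fibW (n + 1) = fibPhi (fibW n) :=
  Function.iterate_succ_apply' _ _ _

lemma fibW_add_two : ∀ n, fibW (n + 2) = fibW (n + 1) ++ fibW n
  | 0 => by decide
  | (n+1) => by
    have h := congrArg fibPhi (fibW_add_two n)
    rw [fibPhi_append, ← fibW_succ, ← fibW_succ, ← fibW_succ] at h
    exact h

lemma fibW_length : ∀ n, (fibW n).length = Nat.fib (n + 2)
  | 0 => by decide
  | 1 => by decide
  | (n+2) => by
    rw [fibW_add_two, List.length_append, fibW_length (n+1), fibW_length n]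
    show Nat.fib (n+3) + Nat.fib (n+2) = Nat.fib (n+4)
    have h : Nat.fib (n+4) = Nat.fib (n+2) + Nat.fib (n+3) := Nat.fib_add_two
    omega

lemma fibW_prefix : ∀ n, fibW n <+: fibW (n + 1)
  | 0 => ⟨[1], by decide⟩
  | (n+1) => by rw [fibW_add_two]; exact List.prefix_append _ _

lemma fibW_prefix_le {a b : ℕ} (h : a ≤ b) : fibW a <+: fibW b := by
  induction b with
  | zero => simp [Nat.le_zero.mp h]
  | succ b ih =>
    rcases Nat.lt_or_ge a (b+1) with h' | h'
    · exact (ih (by omega)).trans (fibW_prefix b)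
    · have : a = b + 1 := by omega
      subst this; rfl

lemma succ_le_fib : ∀ n, n + 1 ≤ Nat.fib (n + 2)
  | 0 => by decide
  | (n+1) => by
    have := succ_le_fib n
    have h2 : 0 < Nat.fib (n+1) := Nat.fib_pos.mpr (by omega)
    show n + 2 ≤ Nat.fib (n+3)
    have h3 : Nat.fib (n+3) = Nat.fib (n+1) + Nat.fib (n+2) := Nat.fib_add_two
    omega

lemma getD_of_prefix {l₁ l₂ : List ℕ} (h : l₁ <+: l₂) {i : ℕ} (hi : i < l₁.length) :
    l₂.getD i 0 = l₁.getD i 0 := by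
  obtain ⟨t, rfl⟩ := h
  exact List.getD_append _ _ _ _ hi

lemma fibWord_eq {n i : ℕ} (h : i < Nat.fib (n + 2)) : fibWord i = (fibW n).getD i 0 := by
  have h1 : fibWord i = (fibW (i + 2)).getD i 0 := rfl
  have hi2 : i < (fibW (i+2)).length := by
    rw [fibW_length]
    calc i < i + 1 := by omega
    _ ≤ Nat.fib (i+2) := succ_le_fib i
    _ ≤ Nat.fib (i+2+2) := Nat.fib_mono (by omega)
  have hn : i < (fibW n).length := by rwa [fibW_length]
  rcases Nat.le_total n (i+2) with hle | hle
  · rw [h1, getD_of_prefix (fibW_prefix_le hle) hn]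
  · rw [h1, ← getD_of_prefix (fibW_prefix_le hle) hi2]

lemma overlap : ∀ a s, s + 3 ≤ Nat.fib (a + 4) →
    (fibW (a+1) ++ fibW a).getD s 0 = (fibW a ++ fibW (a+1)).getD s 0
  | 0, s, hs => by
    have h4 : Nat.fib (0+4) = 3 := by decide
    have : s = 0 := by omega
    subst this; decide
  | (a+1), s, hs => by
    have hs' : s + 3 ≤ Nat.fib (a+5) := hs
    have hW : fibW (a+2) = fibW (a+1) ++ fibW a := fibW_add_two a
    have hlen : (fibW (a+1)).length = Nat.fib (a+3) := fibW_length (a+1)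
    rcases Nat.lt_or_ge s (Nat.fib (a+3)) with hcase | hcase
    · rw [hW, List.append_assoc, List.getD_append _ _ _ _ (by rw [hlen]; exact hcase),
          List.getD_append _ _ _ _ (by rw [hlen]; exact hcase)]
    · have hfib : Nat.fib (a+5) = Nat.fib (a+3) + Nat.fib (a+4) := Nat.fib_add_two
      have L : (fibW (a+2) ++ fibW (a+1)).getD s 0
          = (fibW a ++ fibW (a+1)).getD (s - Nat.fib (a+3)) 0 := by
        rw [hW, List.append_assoc, List.getD_append_right _ _ _ _ (by rw [hlen]; omega), hlen]
      have R : (fibW (a+1) ++ fibW (a+2)).getD s 0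
          = (fibW (a+1) ++ fibW a).getD (s - Nat.fib (a+3)) 0 := by
        rw [List.getD_append_right _ _ _ _ (by rw [hlen]; omega), hlen, hW]
      rw [L, R]
      exact (overlap a (s - Nat.fib (a+3)) (by omega)).symm

lemma fib_period {m t : ℕ} (hm : 3 ≤ m) (h : t + Nat.fib m + 3 ≤ Nat.fib (m + 2)) :
    fibWord (t + Nat.fib m) = fibWord t := by
  obtain ⟨a, rfl⟩ : ∃ a, m = a + 3 := ⟨m - 3, by omega⟩
  have h' : t + Nat.fib (a+3) + 3 ≤ Nat.fib (a+5) := h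
  have hf1 : Nat.fib (a+5) = Nat.fib (a+3) + Nat.fib (a+4) := Nat.fib_add_two
  have hf2 : Nat.fib (a+4) = Nat.fib (a+2) + Nat.fib (a+3) := Nat.fib_add_two
  have ht : t + 3 ≤ Nat.fib (a+4) := by omega
  have e1 : fibWord (t + Nat.fib (a+3)) = (fibW (a+3)).getD (t + Nat.fib (a+3)) 0 :=
    fibWord_eq (show t + Nat.fib (a+3) < Nat.fib (a+5) by omega)
  have hdecomp : fibW (a+3) = fibW (a+1) ++ (fibW a ++ fibW (a+1)) := by
    rw [fibW_add_two (a+1), fibW_add_two a, List.append_assoc]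
  have hlen1 : (fibW (a+1)).length = Nat.fib (a+3) := fibW_length (a+1)
  have e2 : (fibW (a+3)).getD (t + Nat.fib (a+3)) 0 = (fibW a ++ fibW (a+1)).getD t 0 := by
    rw [hdecomp, List.getD_append_right _ _ _ _ (by rw [hlen1]; omega), hlen1]
    congr 1
    omega
  have e3 : (fibW (a+1) ++ fibW a).getD t 0 = (fibW (a+2)).getD t 0 := by
    rw [fibW_add_two a]
  have e4 : fibWord t = (fibW (a+2)).getD t 0 :=
    fibWord_eq (show t < Nat.fib (a+4) by omega)
  rw [e1, e2, ← overlap a t ht, e3, ← e4]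

/-- last two letters of the prefix of length fib (a+3) alternate with a. -/
lemma lastTwo : ∀ a, fibWord (Nat.fib (a+3) - 2) = a % 2 ∧ fibWord (Nat.fib (a+3) - 1) = (a+1) % 2
  | 0 => by constructor <;> decide
  | 1 => by constructor <;> decide
  | (a+2) => by
    obtain ⟨ih1, ih2⟩ := lastTwo a
    have hf1 : Nat.fib (a+5) = Nat.fib (a+3) + Nat.fib (a+4) := Nat.fib_add_two
    have hf2 : Nat.fib (a+4) = Nat.fib (a+2) + Nat.fib (a+3) := Nat.fib_add_two
    have hge : a + 2 ≤ Nat.fib (a+3) := succ_le_fib (a+1)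
    have hlen : (fibW (a+2)).length = Nat.fib (a+4) := fibW_length (a+2)
    have hdec : fibW (a+3) = fibW (a+2) ++ fibW (a+1) := fibW_add_two (a+1)
    have key : ∀ r : ℕ, r < 2 →
        fibWord (Nat.fib (a+5) - 2 + r) = fibWord (Nat.fib (a+3) - 2 + r) := by
      intro r hr
      have e1 : fibWord (Nat.fib (a+5) - 2 + r) = (fibW (a+3)).getD (Nat.fib (a+5) - 2 + r) 0 :=
        fibWord_eq (show _ < Nat.fib (a+5) by omega)
      have e2 : fibWord (Nat.fib (a+3) - 2 + r) = (fibW (a+1)).getD (Nat.fib (a+3) - 2 + r) 0 :=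
        fibWord_eq (show _ < Nat.fib (a+3) by omega)
      rw [e1, e2, hdec, List.getD_append_right _ _ _ _ (by rw [hlen]; omega), hlen]
      congr 1
      omega
    have k0 := key 0 (by omega)
    have k1 := key 1 (by omega)
    simp only [Nat.add_zero] at k0
    constructor
    · show fibWord (Nat.fib (a+5) - 2) = (a+2) % 2
      rw [k0, ih1]; omega
    · show fibWord (Nat.fib (a+5) - 1) = (a+3) % 2
      have : Nat.fib (a+5) - 1 = Nat.fib (a+5) - 2 + 1 := by omega
      rw [this, k1, show Nat.fib (a+3) - 2 + 1 = Nat.fib (a+3) - 1 by omega, ih2]; omega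

/-- The prefix of length fib (l+1) - 1 has no period q < fib l. -/
lemma noPeriod : ∀ l q, 1 ≤ q → q < Nat.fib l →
    ∃ t, t + q ≤ Nat.fib (l+1) - 2 ∧ fibWord t ≠ fibWord (t + q) := by
  intro l
  induction l using Nat.strong_induction_on with
  | _ l ih =>
    intro q hq1 hq2
    rcases Nat.lt_or_ge l 5 with hl | hl
    · interval_cases l
      · have : Nat.fib 0 = 0 := rfl
        omega
      · have : Nat.fib 1 = 1 := by decide
        omega
      · have : Nat.fib 2 = 1 := by decide
        omega
      · have h3 : Nat.fib 3 = 2 := by decide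
        have h4 : Nat.fib (3+1) = 3 := by decide
        have : q = 1 := by omega
        subst this
        exact ⟨0, by omega, by decide⟩
      · have h4 : Nat.fib 4 = 3 := by decide
        have h5 : Nat.fib (4+1) = 5 := by decide
        interval_cases q
        · exact ⟨0, by omega, by decide⟩
        · exact ⟨1, by omega, by decide⟩
    · obtain ⟨a, rfl⟩ : ∃ a, l = a + 5 := ⟨l - 5, by omega⟩
      have hg : Nat.fib (a+5+1) = Nat.fib (a+6) := rfl
      have hg2 : Nat.fib (a+4+1) = Nat.fib (a+5) := rfl
      have hg3 : Nat.fib (a+3+1) = Nat.fib (a+4) := rfl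
      have hf1 : Nat.fib (a+5) = Nat.fib (a+3) + Nat.fib (a+4) := Nat.fib_add_two
      have hf2 : Nat.fib (a+6) = Nat.fib (a+4) + Nat.fib (a+5) := Nat.fib_add_two
      have hf3 : Nat.fib (a+4) = Nat.fib (a+2) + Nat.fib (a+3) := Nat.fib_add_two
      have hlt45 : Nat.fib (a+4) < Nat.fib (a+5) := Nat.fib_lt_fib_succ (by omega)
      have hp3 : a + 2 ≤ Nat.fib (a+3) := succ_le_fib (a+1)
      rcases Nat.lt_trichotomy q (Nat.fib (a+4)) with hc | hc | hc
      · obtain ⟨t, ht1, ht2⟩ := ih (a+4) (by omega) q hq1 hc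
        exact ⟨t, by omega, ht2⟩
      · subst hc
        refine ⟨Nat.fib (a+5) - 2, by omega, ?_⟩
        obtain ⟨l1, _⟩ := lastTwo (a+2)
        obtain ⟨l2, _⟩ := lastTwo (a+3)
        have hg4 : Nat.fib (a+2+3) = Nat.fib (a+5) := rfl
        have hg5 : Nat.fib (a+3+3) = Nat.fib (a+6) := rfl
        rw [hg4] at l1
        rw [hg5] at l2
        have e : Nat.fib (a+5) - 2 + Nat.fib (a+4) = Nat.fib (a+6) - 2 := by omega
        rw [e, l1, l2]
        omega
      · by_contra hcon
        push_neg at hcon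
        set q' := q - Nat.fib (a+4) with hq'
        have hq'1 : 1 ≤ q' := by omega
        have hq'2 : q' < Nat.fib (a+3) := by omega
        obtain ⟨t, ht1, ht2⟩ := ih (a+3) (by omega) q' hq'1 hq'2
        rw [hg3] at ht1
        have e1 : fibWord (t + q' + Nat.fib (a+4)) = fibWord (t + q') := by
          have := fib_period (m := a+4) (t := t + q') (by omega)
            (show t + q' + Nat.fib (a+4) + 3 ≤ Nat.fib (a+4+2) by
              show t + q' + Nat.fib (a+4) + 3 ≤ Nat.fib (a+6); omega)
          exact this
        have e2 : fibWord t = fibWord (t + q) := hcon t (by omega)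
        have e3 : t + q = t + q' + Nat.fib (a+4) := by omega
        rw [e3, e1] at e2
        exact ht2 e2

/-- every i ≥ fib k sits in some window [fib m, fib (m+1)) with m ≥ k. -/
lemma exists_fib_interval (k i : ℕ) (h : Nat.fib k ≤ i) :
    ∃ m, k ≤ m ∧ Nat.fib m ≤ i ∧ i < Nat.fib (m+1) := by
  have hub : i < Nat.fib (i + 2) := by have := succ_le_fib i; omega
  have hex : ∃ s, i < Nat.fib s := ⟨i + 2, hub⟩
  classical
  let s₀ := Nat.find hex
  have hs₀ : i < Nat.fib s₀ := Nat.find_spec hex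
  have hk : k + 1 ≤ s₀ := by
    by_contra hcon
    have : s₀ ≤ k := by omega
    have := Nat.fib_mono this
    omega
  refine ⟨s₀ - 1, by omega, ?_, ?_⟩
  · have := Nat.find_min hex (m := s₀ - 1) (by omega)
    omega
  · have : s₀ - 1 + 1 = s₀ := by omega
    rw [this]; exact hs₀

/-- Main cover lemma: for k ≥ 3, every position i has an occurrence j of the
prefix of length fib (k+1) - 2 with i - fib k < j ≤ i. -/
lemma cover (k : ℕ) (hk : 3 ≤ k) : ∀ i, ∃ j, j ≤ i ∧ i < j + Nat.fib k ∧
    (j = 0 ∨ ∃ m, k ≤ m ∧ Nat.fib m ≤ j ∧ j + Nat.fib (k+1) ≤ Nat.fib (m+2)) ∧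
    (∀ t, t + 3 ≤ Nat.fib (k+1) → fibWord (j + t) = fibWord t) := by
  intro i
  induction i using Nat.strong_induction_on with
  | _ i ih =>
    rcases Nat.lt_or_ge i (Nat.fib k) with hi | hi
    · exact ⟨0, by omega, by omega, Or.inl rfl, fun t _ => by rw [Nat.zero_add]⟩
    · obtain ⟨m, hkm, hm1, hm2⟩ := exists_fib_interval k i hi
      have hm3 : 3 ≤ m := le_trans hk hkm
      have hfibm : 2 ≤ Nat.fib m := by
        have h3 : Nat.fib 3 = 2 := by decide
        have := Nat.fib_mono hm3
        omega
      have hlt : i - Nat.fib m < i := by omega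
      obtain ⟨j', h1, h2, hInv, hQ⟩ := ih (i - Nat.fib m) hlt
      have hfm2 : Nat.fib (m+2) = Nat.fib m + Nat.fib (m+1) := Nat.fib_add_two
      have hmono : Nat.fib (k+1) ≤ Nat.fib (m+1) := Nat.fib_mono (by omega)
      -- j' + fib (k+1) ≤ fib (m+1)  in both inv cases
      have hkey : j' + Nat.fib (k+1) ≤ Nat.fib (m+1) := by
        rcases hInv with rfl | ⟨m', hm'1, hm'2, hm'3⟩
        · omega
        · -- fib m' ≤ j' ≤ i - fib m < fib (m+1) - fib m = fib (m-1)
          obtain ⟨c, rfl⟩ : ∃ c, m = c + 3 := ⟨m - 3, by omega⟩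
          have hfc : Nat.fib (c+3) = Nat.fib (c+1) + Nat.fib (c+2) := Nat.fib_add_two
          have hfc2 : Nat.fib (c+4) = Nat.fib (c+2) + Nat.fib (c+3) := Nat.fib_add_two
          have hj'lt : j' < Nat.fib (c+2) := by
            have : Nat.fib (c+3+1) = Nat.fib (c+4) := rfl
            omega
          have hm'le : m' + 2 ≤ c + 4 := by
            by_contra hcon
            have : c + 3 ≤ m' := by omega
            have := Nat.fib_mono this
            omega
          have hmono2 : Nat.fib (m'+2) ≤ Nat.fib (c+4) := Nat.fib_mono hm'le
          have hb1 : Nat.fib (c+3+1) = Nat.fib (c+4) := rfl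
          omega
      refine ⟨Nat.fib m + j', by omega, by omega, ?_, ?_⟩
      · exact Or.inr ⟨m, hkm, by omega, by omega⟩
      · intro t ht
        have hb : j' + t + Nat.fib m + 3 ≤ Nat.fib (m+2) := by omega
        have e1 : fibWord (j' + t + Nat.fib m) = fibWord (j' + t) := fib_period hm3 hb
        have e2 : Nat.fib m + j' + t = j' + t + Nat.fib m := by omega
        rw [e2, e1, hQ t ht]

/-- For n ≥ 1, the length-n prefix of the Fibonacci word is a quasiperiod
(in the aligned-cover sense) iff n is not of the form F_m − 1 with m ≥ 3. -/
theorem fibWord_quasiperiods :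
    ∀ n : ℕ, 1 ≤ n →
      ((∀ i : ℕ, ∃ j : ℕ, j ≤ i ∧ i < j + n ∧ ∀ t < n, fibWord (j + t) = fibWord t) ↔
        ¬ ∃ m : ℕ, 3 ≤ m ∧ n + 1 = Nat.fib m) := by
  intro n hn
  constructor
  · -- quasiperiod ⇒ n+1 is not a Fibonacci number F_m, m ≥ 3
    intro hQP ⟨m, hm3, hfm⟩
    obtain ⟨b, rfl⟩ : ∃ b, m = b + 3 := ⟨m - 3, by omega⟩
    -- n = fib (b+3) - 1
    obtain ⟨j, hj1, hj2, hocc⟩ := hQP n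
    have hj0 : 1 ≤ j := by omega
    have hf1 : Nat.fib (b+4) = Nat.fib (b+2) + Nat.fib (b+3) := Nat.fib_add_two
    rcases Nat.lt_or_ge j (Nat.fib (b+2)) with hc | hc
    · -- small j : use noPeriod (b+2)
      obtain ⟨t, ht1, ht2⟩ := noPeriod (b+2) j hj0 hc
      have hg : Nat.fib (b+2+1) = Nat.fib (b+3) := rfl
      have htn : t < n := by omega
      have := hocc t htn
      rw [Nat.add_comm j t] at this
      exact ht2 this.symm
    · -- large j : use noPeriod (b+3)
      have hjlt : j < Nat.fib (b+3) := by omega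
      obtain ⟨t, ht1, ht2⟩ := noPeriod (b+3) j hj0 hjlt
      have hg : Nat.fib (b+3+1) = Nat.fib (b+4) := rfl
      have htn : t < n := by omega
      have := hocc t htn
      rw [Nat.add_comm j t] at this
      exact ht2 this.symm
  · -- n+1 not Fibonacci ⇒ quasiperiod
    intro hno i
    have h2 : Nat.fib 3 ≤ n + 1 := by
      have h3 : Nat.fib 3 = 2 := by decide
      omega
    obtain ⟨m, hm3, hm1, hm2⟩ := exists_fib_interval 3 (n+1) h2
    have hne : n + 1 ≠ Nat.fib m := fun h => hno ⟨m, hm3, h⟩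
    have hfmn : Nat.fib m ≤ n := by omega
    obtain ⟨j, hj1, hj2, _, hQ⟩ := cover m hm3 i
    refine ⟨j, hj1, by omega, fun t ht => hQ t ?_⟩
    omega
end

section
/- The critical exponent of the infinite Fibonacci word f equals 2 + α = (5 + √5)/2, where α = (1 + √5)/2; that is, the supremum over all nonempty factors w of f of the ratio |w|/p(w), where p(w) is the least period of w, equals (5 + √5)/2 (and this supremum is not attained). -/
/-- p ≥ 1 is a period of the finite word x. -/
def HasPeriod (x : List ℕ) (p : ℕ) : Prop :=
  1 ≤ p ∧ ∀ i : ℕ, i + p < x.length → x.getD i 0 = x.getD (i + p) 0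

/-- The set of exponents |w|/p(w) of nonempty factors w of the Fibonacci word,
where p(w) is the least period of w. -/
def fibExponents : Set ℝ :=
  {r : ℝ | ∃ (x : List ℕ) (p : ℕ), IsFibFactor x ∧ x ≠ [] ∧
    IsLeast {q : ℕ | HasPeriod x q} p ∧ r = (x.length : ℝ) / (p : ℝ)}

/-!
Let `rot m` be the fractional part of `m ψ²`, where `ψ² = φ⁻²`. Since
`F (n+2) ψ² = F n + ψ ^ (n+2)`, adding `F (n+2)` to `m` moves `rot m` by the tiny amount
`ψ ^ (n+2)`; together with `f (s + F (n+3)) = f s` for `s < F (n+2)` this shows that `f t = 1`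
exactly when `rot (t+1) ∈ [|ψ|, 1)`: `f` is the Sturmian word of slope `φ⁻²`.

A period `p` of a factor shifts the orbit points of the corresponding range by `rot p` without
moving any of them into or out of `[|ψ|, 1)`. If `F z ≤ p < F (z+1)`, then `rot p` is at distance
at least `|ψ| ^ z` from `0` (best approximation), while any `F (z+2)` consecutive orbit points
contain one less than `|ψ| ^ z` above `0` and one less than `|ψ| ^ z` below `1`; one of these two
is moved across an end of the interval. Hence the factor is shorter than `p + F (z+2) < (φ + 2) p`,
and the bound `φ + 2 = (5 + √5)/2` is never attained. For even `n`, the factor of length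
`F (n+4) + F (n+2) - 2` starting at `F (n+3)` has period `F (n+2)`, and these exponents tend to
`φ² + 1 = φ + 2`.
-/

open Set Filter Topology
open scoped goldenRatio
open Nat (fib greatestFib)
open Real

namespace FibonacciWord

lemma abs_goldenConj : |ψ| = -ψ := abs_of_neg goldenConj_neg

lemma abs_goldenConj_add_sq : |ψ| + ψ ^ 2 = 1 := by
  rw [abs_goldenConj, goldenConj_sq]; ring

lemma abs_goldenConj_pos : 0 < |ψ| := abs_pos.mpr goldenConj_ne_zero

lemma abs_goldenConj_lt_one : |ψ| < 1 := by
  rw [abs_goldenConj]; linarith [neg_one_lt_goldenConj]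

lemma half_lt_abs_goldenConj : 1 / 2 < |ψ| := by
  have : 2 < √5 := by
    rw [lt_sqrt (by norm_num)]; norm_num
  rw [abs_goldenConj, goldenConj]; linarith

lemma abs_goldenConj_lt_two_thirds : |ψ| < 2 / 3 := by
  have : √5 < 7 / 3 := by
    rw [sqrt_lt' (by norm_num)]; norm_num
  rw [abs_goldenConj, goldenConj]; linarith

lemma goldenConj_sq_pos : 0 < ψ ^ 2 := by
  linarith [abs_goldenConj_add_sq, abs_goldenConj_lt_one]

lemma goldenConj_sq_lt_abs_goldenConj : ψ ^ 2 < |ψ| := by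
  linarith [abs_goldenConj_add_sq, half_lt_abs_goldenConj]

lemma abs_goldenConj_pow_le {m n : ℕ} (h : m ≤ n) : |ψ| ^ n ≤ |ψ| ^ m :=
  pow_le_pow_of_le_one (abs_nonneg _) abs_goldenConj_lt_one.le h

lemma abs_goldenConj_pow_lt_one {n : ℕ} (hn : n ≠ 0) : |ψ| ^ n < 1 :=
  pow_lt_one₀ (abs_nonneg _) abs_goldenConj_lt_one hn

lemma abs_goldenConj_pow_add_two_le (n : ℕ) : |ψ| ^ (n + 2) ≤ ψ ^ 2 := by
  rw [← sq_abs]; exact abs_goldenConj_pow_le (by omega)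

lemma abs_goldenConj_pow_sub (n : ℕ) : |ψ| ^ n - |ψ| ^ (n + 2) = |ψ| ^ (n + 1) := by
  have h := abs_goldenConj_add_sq
  rw [← sq_abs] at h
  linear_combination (-|ψ| ^ n) * h

lemma fib_add_two_mul_goldenConj_sq (n : ℕ) :
    (fib (n + 2) : ℝ) * ψ ^ 2 = fib n + ψ ^ (n + 2) := by
  have h := goldenConj_mul_fib_succ_add_fib (n + 1)
  have hf : (fib (n + 2) : ℝ) = fib n + fib (n + 1) := by
    rw [Nat.fib_add_two]; push_cast; ring
  rw [goldenConj_sq]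
  linear_combination h + hf

lemma fib_add_two_sub_goldenRatio_sq_mul_fib (n : ℕ) :
    (fib (n + 2) : ℝ) - φ ^ 2 * fib n = ψ ^ n := by
  have h := fib_add_two_mul_goldenConj_sq n
  have e := goldenRatio_mul_goldenConj
  linear_combination φ ^ 2 * h - ((fib (n + 2) : ℝ) - ψ ^ n) * (φ * ψ - 1) * e

lemma fract_eq_sub_one {x : ℝ} (h₁ : 1 ≤ x) (h₂ : x < 2) : Int.fract x = x - 1 :=
  Int.fract_eq_iff.mpr ⟨by linarith, by linarith, 1, by push_cast; ring⟩

lemma fract_mem_Icc_of_abs_eq {δ ε : ℝ} (h : |δ| = ε) (hε₀ : 0 < ε) (hε : ε ≤ 1 / 2) :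
    Int.fract δ ∈ Icc ε (1 - ε) := by
  obtain rfl | rfl := (abs_eq hε₀.le).mp h
  · rw [Int.fract_eq_self.mpr ⟨hε₀.le, by linarith⟩]; constructor <;> linarith
  · have : Int.fract (-ε) = 1 - ε :=
      Int.fract_eq_iff.mpr ⟨by linarith, by linarith, -1, by push_cast; ring⟩
    rw [this]; constructor <;> linarith

noncomputable def rot (m : ℕ) : ℝ := Int.fract (m * ψ ^ 2)

lemma rot_nonneg (m : ℕ) : 0 ≤ rot m := Int.fract_nonneg _

lemma rot_lt_one (m : ℕ) : rot m < 1 := Int.fract_lt_one _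

@[simp] lemma rot_zero : rot 0 = 0 := by simp [rot]

lemma rot_one : rot 1 = ψ ^ 2 := by
  rw [rot, Nat.cast_one, one_mul, Int.fract_eq_self]
  exact ⟨goldenConj_sq_pos.le,
    by linarith [goldenConj_sq_lt_abs_goldenConj, abs_goldenConj_lt_one]⟩

lemma rot_add (m q : ℕ) : rot (m + q) = Int.fract (rot m + rot q) := by
  rw [rot, rot, rot, Int.fract_eq_fract]
  exact ⟨⌊(m : ℝ) * ψ ^ 2⌋ + ⌊(q : ℝ) * ψ ^ 2⌋,
    by rw [Int.fract, Int.fract]; push_cast; ring⟩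

lemma rot_add_fib (q n : ℕ) : rot (q + fib (n + 2)) = Int.fract (rot q + ψ ^ (n + 2)) := by
  have h := fib_add_two_mul_goldenConj_sq n
  rw [rot, rot, Int.fract_eq_fract]
  exact ⟨⌊(q : ℝ) * ψ ^ 2⌋ + fib n, by rw [Int.fract]; push_cast; linear_combination h⟩

theorem rot_mem_Icc {q z : ℕ} (hq : 0 < q) (hqz : q < fib (z + 1)) :
    rot q ∈ Icc (|ψ| ^ z) (1 - |ψ| ^ z) := by
  induction z using Nat.strong_induction_on generalizing q with
  | _ z ih =>
  obtain _ | _ | n := z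
  · simp at hqz; omega
  · simp at hqz; omega
  replace hqz : q < fib (n + 3) := hqz
  show rot q ∈ Icc (|ψ| ^ (n + 2)) (1 - |ψ| ^ (n + 2))
  rcases lt_or_ge q (fib (n + 2)) with hlt | hge
  · have hle := abs_goldenConj_pow_le (show n + 1 ≤ n + 2 by omega)
    obtain ⟨h₁, h₂⟩ := ih (n + 1) (by omega) hq hlt
    constructor <;> linarith
  obtain ⟨q', rfl⟩ := Nat.exists_eq_add_of_le' hge
  have hψ : |ψ ^ (n + 2)| = |ψ| ^ (n + 2) := abs_pow ψ (n + 2)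
  rw [rot_add_fib]
  rcases Nat.eq_zero_or_pos q' with rfl | hq'
  · rw [rot_zero, zero_add]
    exact fract_mem_Icc_of_abs_eq hψ (pow_pos abs_goldenConj_pos _)
      ((abs_goldenConj_pow_add_two_le n).trans (by linarith [goldenConj_sq_lt_abs_goldenConj,
        abs_goldenConj_add_sq]))
  · have hq'n : q' < fib (n + 1) := by
      have : fib (n + 3) = fib (n + 1) + fib (n + 2) := Nat.fib_add_two
      omega
    obtain ⟨h₁, h₂⟩ := ih n (by omega) hq' hq'n
    have hsplit := abs_goldenConj_pow_sub n
    have hle := abs_goldenConj_pow_le (show n + 1 ≤ n + 2 by omega)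
    have hpos := pow_pos abs_goldenConj_pos (n + 2)
    have hδ := abs_le.mp hψ.le
    rw [Int.fract_eq_self.mpr ⟨by linarith, by linarith⟩]
    constructor <;> linarith

lemma rot_pos {q : ℕ} (hq : 0 < q) : 0 < rot q :=
  (pow_pos abs_goldenConj_pos _).trans_le (rot_mem_Icc hq (Nat.lt_fib_greatestFib_add_one q)).1

lemma rot_add_fib_of_lt {q n : ℕ} (hq : 0 < q) (hqn : q < fib (n + 3)) :
    rot (q + fib (n + 2)) = rot q + ψ ^ (n + 2) := by
  obtain ⟨h₁, h₂⟩ := rot_mem_Icc hq hqn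
  have hδ := abs_le.mp (abs_pow ψ (n + 2)).le
  have hpos := rot_pos (show 0 < q + fib (n + 2) by omega)
  rw [rot_add_fib] at hpos ⊢
  rw [Int.fract_eq_self]
  refine ⟨by linarith, lt_of_le_of_ne (by linarith) fun h => ?_⟩
  rw [h, Int.fract_one] at hpos
  exact hpos.false

lemma rot_fib_of_even {n : ℕ} (hn : Even n) : rot (fib (n + 2)) = |ψ| ^ (n + 2) := by
  have h := rot_add_fib 0 n
  rw [zero_add, rot_zero, zero_add, ← (hn.add even_two).pow_abs] at h
  rw [h, Int.fract_eq_self]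
  exact ⟨(pow_pos abs_goldenConj_pos _).le, abs_goldenConj_pow_lt_one (by omega)⟩

lemma abs_goldenConj_le_rot_iff (m : ℕ) : |ψ| ≤ rot m ↔ rot (m + 1) < rot m := by
  have h := rot_add m 1
  have hs := abs_goldenConj_add_sq
  have := goldenConj_sq_pos
  have := rot_lt_one m
  have := abs_goldenConj_pos
  rw [rot_one] at h
  constructor
  · intro hle
    rw [h, fract_eq_sub_one (by linarith) (by linarith)]
    linarith
  · intro hlt
    by_contra! hlt'
    rw [h, Int.fract_eq_self.mpr ⟨by linarith [rot_nonneg m], by linarith⟩] at hlt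
    linarith

def fibPrefix (n : ℕ) : List ℕ := fibPhi^[n] [0]

lemma fibPrefix_succ (n : ℕ) : fibPrefix (n + 1) = fibPhi (fibPrefix n) :=
  Function.iterate_succ_apply' fibPhi n [0]

lemma fibPhi_append (u v : List ℕ) : fibPhi (u ++ v) = fibPhi u ++ fibPhi v := by
  simp [fibPhi]

lemma fibPrefix_add_two (n : ℕ) : fibPrefix (n + 2) = fibPrefix (n + 1) ++ fibPrefix n := by
  induction n with
  | zero => rfl
  | succ n ih =>
    calc fibPrefix (n + 3) = fibPhi (fibPrefix (n + 2)) := fibPrefix_succ _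
      _ = fibPhi (fibPrefix (n + 1)) ++ fibPhi (fibPrefix n) := by rw [ih, fibPhi_append]
      _ = fibPrefix (n + 2) ++ fibPrefix (n + 1) := by rw [← fibPrefix_succ, ← fibPrefix_succ]

lemma length_fibPrefix (n : ℕ) : (fibPrefix n).length = fib (n + 2) := by
  induction n using Nat.twoStepInduction with
  | zero => rfl
  | one => rfl
  | more n ih₁ ih₂ =>
    rw [fibPrefix_add_two, List.length_append, ih₁, ih₂, Nat.fib_add_two (n := n + 2), add_comm]

lemma fibPrefix_prefix {m n : ℕ} (h : m ≤ n) : fibPrefix m <+: fibPrefix n := by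
  induction n, h using Nat.le_induction with
  | base => exact List.prefix_rfl
  | succ n _ ih =>
    refine ih.trans ?_
    cases n with
    | zero => exact ⟨[1], rfl⟩
    | succ n => rw [fibPrefix_add_two]; exact List.prefix_append _ _

lemma fibWord_eq_getD {t n : ℕ} (ht : t < (fibPrefix n).length) :
    fibWord t = (fibPrefix n).getD t 0 := by
  have getD_eq {l₁ l₂ : List ℕ} (h : l₁ <+: l₂) (ht : t < l₁.length) :
      l₁.getD t 0 = l₂.getD t 0 := by
    obtain ⟨r, rfl⟩ := h; exact (List.getD_append _ _ _ _ ht).symm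
  have ht' : t < (fibPrefix (t + 2)).length := by
    rw [length_fibPrefix]
    exact (Nat.fib_add_two_strictMono.id_le t).trans_lt (Nat.fib_add_two_strictMono (by omega))
  rcases le_total n (t + 2) with h | h
  · exact (getD_eq (fibPrefix_prefix h) ht).symm
  · exact getD_eq (fibPrefix_prefix h) ht'

lemma fibWord_add_fib {s n : ℕ} (hs : s < fib (n + 2)) :
    fibWord (s + fib (n + 3)) = fibWord s := by
  have hlen : (fibPrefix (n + 1)).length = fib (n + 3) := length_fibPrefix (n + 1)
  have hlen' : (fibPrefix (n + 2)).length = fib (n + 4) := length_fibPrefix (n + 2)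
  have hF : fib (n + 4) = fib (n + 2) + fib (n + 3) := Nat.fib_add_two
  rw [fibWord_eq_getD (n := n + 2) (by omega), fibPrefix_add_two,
    List.getD_append_right _ _ _ _ (by omega), hlen, Nat.add_sub_cancel,
    ← fibWord_eq_getD (by rw [length_fibPrefix]; exact hs)]

theorem fibWord_eq_ite (t : ℕ) : fibWord t = if |ψ| ≤ rot (t + 1) then 1 else 0 := by
  induction t using Nat.strong_induction_on with
  | _ t ih =>
  have hs := abs_goldenConj_add_sq
  match t with
  | 0 =>
    rw [if_neg (by rw [rot_one]; linarith [half_lt_abs_goldenConj])]; rfl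
  | 1 =>
    have h2 : rot 2 = 2 * ψ ^ 2 := by
      rw [rot]; push_cast; rw [Int.fract_eq_self]
      constructor <;> linarith [goldenConj_sq_pos, half_lt_abs_goldenConj]
    rw [if_pos (by rw [h2]; linarith [abs_goldenConj_lt_two_thirds])]; rfl
  | t + 2 =>
    have hF3 : fib 3 = 2 := rfl
    obtain ⟨n, hn⟩ : ∃ n, greatestFib (t + 2) = n + 3 := ⟨greatestFib (t + 2) - 3, by
      have := Nat.le_greatestFib.mpr (show fib 3 ≤ t + 2 by omega); omega⟩
    have h₁ : fib (n + 3) ≤ t + 2 := hn ▸ Nat.fib_greatestFib_le (t + 2)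
    have h₂ : t + 2 < fib (n + 4) := by
      have := Nat.lt_fib_greatestFib_add_one (t + 2); rwa [hn] at this
    obtain ⟨s, hst⟩ := Nat.exists_eq_add_of_le' h₁
    have hF : fib (n + 4) = fib (n + 2) + fib (n + 3) := Nat.fib_add_two
    have hs₂ : s < fib (n + 2) := by omega
    have hF3' : 2 ≤ fib (n + 3) := hF3 ▸ Nat.fib_mono (by omega)
    have hF4 : fib (n + 1 + 3) = fib (n + 4) := rfl
    have key : |ψ| ≤ rot (s + fib (n + 3) + 1) ↔ |ψ| ≤ rot (s + 1) := by
      rw [abs_goldenConj_le_rot_iff, abs_goldenConj_le_rot_iff,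
        show s + fib (n + 3) + 1 = (s + 1) + fib (n + 1 + 2) by ring,
        show s + 1 + fib (n + 1 + 2) + 1 = (s + 1 + 1) + fib (n + 1 + 2) by ring,
        rot_add_fib_of_lt (by omega) (by omega), rot_add_fib_of_lt (by omega) (by omega),
        add_lt_add_iff_right]
    rw [hst, fibWord_add_fib hs₂, ih s (by omega)]
    simp only [key]

lemma fibWord_eq_fibWord_iff (s t : ℕ) :
    fibWord s = fibWord t ↔ (|ψ| ≤ rot (s + 1) ↔ |ψ| ≤ rot (t + 1)) := by
  rw [fibWord_eq_ite, fibWord_eq_ite]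
  by_cases hs : |ψ| ≤ rot (s + 1) <;> by_cases ht : |ψ| ≤ rot (t + 1) <;> simp [hs, ht]

lemma exists_mem_Ioc_of_strictMono {h : ℕ → ℤ} {G a : ℤ} (hmono : StrictMono h)
    (hstep : ∀ j, h (j + 1) ≤ h j + G) (h₀ : h 0 ≤ a) : ∃ j, a < h j ∧ h j ≤ a + G := by
  by_contra! hno
  have hle : ∀ j, h j ≤ a := by
    intro j
    induction j with
    | zero => exact h₀
    | succ j ih => by_contra! hlt; linarith [hno _ hlt, hstep j]
  have hgrow : ∀ j : ℕ, h 0 + j ≤ h j := by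
    intro j
    induction j with
    | zero => simp
    | succ j ih => push_cast; linarith [hmono (Nat.lt_succ_self j)]
  have := hgrow (a - h 0 + 1).toNat
  linarith [hle (a - h 0 + 1).toNat, Int.self_le_toNat (a - h 0 + 1)]

lemma exists_rot_eq_fract_in_window (n c m₀ : ℕ) :
    ∃ m j : ℕ, m₀ < m ∧ m ≤ m₀ + fib (n + 4) ∧ 0 < j ∧
      rot m = Int.fract (ψ ^ (n + 2) * (rot j - c)) := by
  -- `h j ψ² ≡ ψ^(n+2) (rot j - c) mod 1`, since `F (k+2) ψ² ≡ ψ^(k+2)`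
  set h : ℕ → ℤ := fun j => fib (n + 4) * j - fib (n + 2) * (⌊(j : ℝ) * ψ ^ 2⌋ + c) with hh
  have hF : fib (n + 4) = fib (n + 2) + fib (n + 3) := Nat.fib_add_two
  have hF3 : 0 < fib (n + 3) := Nat.fib_pos.mpr (by omega)
  have hjump (j : ℕ) : h (j + 1) = h j + fib (n + 4) ∨ h (j + 1) = h j + fib (n + 3) := by
    have h₁ : ⌊(j : ℝ) * ψ ^ 2⌋ ≤ ⌊((j + 1 : ℕ) : ℝ) * ψ ^ 2⌋ :=
      Int.floor_le_floor (by push_cast; nlinarith [goldenConj_sq_pos])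
    have h₂ : ⌊((j + 1 : ℕ) : ℝ) * ψ ^ 2⌋ ≤ ⌊(j : ℝ) * ψ ^ 2⌋ + 1 := by
      rw [← Int.floor_add_one]
      exact Int.floor_le_floor (by push_cast; nlinarith [goldenConj_sq_lt_abs_goldenConj,
        abs_goldenConj_add_sq, abs_goldenConj_pos])
    obtain hd | hd : ⌊((j + 1 : ℕ) : ℝ) * ψ ^ 2⌋ = ⌊(j : ℝ) * ψ ^ 2⌋ ∨
        ⌊((j + 1 : ℕ) : ℝ) * ψ ^ 2⌋ = ⌊(j : ℝ) * ψ ^ 2⌋ + 1 := by omega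
    · left; simp only [hh, hd]; push_cast; ring
    · right; simp only [hh, hd]; push_cast; rw [hF]; push_cast; ring
  have h0 : h 0 = -(fib (n + 2) * c) := by simp [hh]
  have hc : (0 : ℤ) ≤ fib (n + 2) * c := by positivity
  have hmono : StrictMono h := strictMono_nat_of_lt_succ fun j => by
    rcases hjump j with hj | hj <;> omega
  obtain ⟨j, hj₁, hj₂⟩ := exists_mem_Ioc_of_strictMono (G := fib (n + 4)) (a := m₀) hmono
    (fun j => by rcases hjump j with hj | hj <;> omega)
    (by rw [h0]; omega)
  have hj : 0 < j := Nat.pos_of_ne_zero fun hj0 => by subst hj0; omega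
  have hcast : (((h j).toNat : ℕ) : ℝ) = (h j : ℝ) := by
    rw [← Int.cast_natCast, Int.toNat_of_nonneg (by omega)]
  refine ⟨(h j).toNat, j, by omega, by omega, hj, ?_⟩
  have e₄ := fib_add_two_mul_goldenConj_sq (n + 2)
  have e₂ := fib_add_two_mul_goldenConj_sq n
  rw [rot, hcast, Int.fract_eq_fract]
  refine ⟨fib (n + 2) * j - fib n * (⌊(j : ℝ) * ψ ^ 2⌋ + c), ?_⟩
  simp only [hh, rot, Int.fract]
  push_cast
  linear_combination (j : ℝ) * e₄ - ((⌊(j : ℝ) * ψ ^ 2⌋ : ℝ) + c) * e₂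

lemma exists_rot_lt (n m₀ : ℕ) :
    ∃ m, m₀ < m ∧ m ≤ m₀ + fib (n + 4) ∧ rot m < |ψ| ^ (n + 2) := by
  obtain ⟨c, hc⟩ : ∃ c : ℕ, ∀ u ∈ Ioo (0 : ℝ) 1,
      ψ ^ (n + 2) * (u - c) ∈ Ioo 0 (|ψ| ^ (n + 2)) := by
    rw [← abs_pow]
    rcases abs_choice (ψ ^ (n + 2)) with h | h
    · refine ⟨0, fun u ⟨hu₀, hu₁⟩ => ?_⟩
      have : 0 < ψ ^ (n + 2) := h ▸ abs_pos.mpr (pow_ne_zero _ goldenConj_ne_zero)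
      rw [h]; push_cast; constructor <;> nlinarith
    · refine ⟨1, fun u ⟨hu₀, hu₁⟩ => ?_⟩
      have : 0 < -ψ ^ (n + 2) := h ▸ abs_pos.mpr (pow_ne_zero _ goldenConj_ne_zero)
      rw [h]; push_cast; constructor <;> nlinarith
  obtain ⟨m, j, hm₁, hm₂, hj, hrot⟩ := exists_rot_eq_fract_in_window n c m₀
  obtain ⟨h₀, h₁⟩ := hc (rot j) ⟨rot_pos hj, rot_lt_one j⟩
  refine ⟨m, hm₁, hm₂, ?_⟩
  rwa [hrot, Int.fract_eq_self.mpr ⟨h₀.le, h₁.trans (abs_goldenConj_pow_lt_one (by omega))⟩]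

lemma exists_one_sub_lt_rot (n m₀ : ℕ) :
    ∃ m, m₀ < m ∧ m ≤ m₀ + fib (n + 4) ∧ 1 - |ψ| ^ (n + 2) < rot m := by
  obtain ⟨c, hc⟩ : ∃ c : ℕ, ∀ u ∈ Ioo (0 : ℝ) 1,
      ψ ^ (n + 2) * (u - c) ∈ Ioo (-|ψ| ^ (n + 2)) 0 := by
    rw [← abs_pow]
    rcases abs_choice (ψ ^ (n + 2)) with h | h
    · refine ⟨1, fun u ⟨hu₀, hu₁⟩ => ?_⟩
      have : 0 < ψ ^ (n + 2) := h ▸ abs_pos.mpr (pow_ne_zero _ goldenConj_ne_zero)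
      rw [h]; push_cast; constructor <;> nlinarith
    · refine ⟨0, fun u ⟨hu₀, hu₁⟩ => ?_⟩
      have : 0 < -ψ ^ (n + 2) := h ▸ abs_pos.mpr (pow_ne_zero _ goldenConj_ne_zero)
      rw [h]; push_cast; constructor <;> nlinarith
  obtain ⟨m, j, hm₁, hm₂, hj, hrot⟩ := exists_rot_eq_fract_in_window n c m₀
  obtain ⟨h₀, h₁⟩ := hc (rot j) ⟨rot_pos hj, rot_lt_one j⟩
  have hε := abs_goldenConj_pow_lt_one (n := n + 2) (by omega)
  refine ⟨m, hm₁, hm₂, ?_⟩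
  have : Int.fract (ψ ^ (n + 2) * (rot j - c)) = ψ ^ (n + 2) * (rot j - c) + 1 :=
    Int.fract_eq_iff.mpr ⟨by linarith, by linarith, -1, by push_cast; ring⟩
  rw [hrot, this]
  linarith

theorem length_lt_of_period {i L p n : ℕ} (hp : fib (n + 2) ≤ p) (hpn : p < fib (n + 3))
    (hper : ∀ t, t + p < L → fibWord (i + t) = fibWord (i + t + p)) : L < p + fib (n + 4) := by
  by_contra! hL
  have hmatch (m : ℕ) (h₁ : i < m) (h₂ : m ≤ i + fib (n + 4)) :
      |ψ| ≤ rot m ↔ |ψ| ≤ rot (m + p) := by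
    obtain ⟨t, rfl⟩ : ∃ t, m = i + t + 1 := ⟨m - i - 1, by omega⟩
    rw [show i + t + 1 + p = i + t + p + 1 by ring, ← fibWord_eq_fibWord_iff]
    exact hper t (by omega)
  obtain ⟨hρ₁, hρ₂⟩ := rot_mem_Icc ((Nat.fib_pos.mpr (by omega)).trans_le hp) hpn
  have hε := abs_goldenConj_pow_add_two_le n
  have hs := abs_goldenConj_add_sq
  rcases lt_or_ge (rot p) |ψ| with hρ | hρ
  · -- a point just below `1` is in `[|ψ|, 1)` but is pushed past `1` and out of it
    obtain ⟨m, hm₁, hm₂, hm⟩ := exists_one_sub_lt_rot n i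
    have hwrap : rot (m + p) = rot m + rot p - 1 := by
      rw [rot_add, fract_eq_sub_one (by linarith) (by linarith [rot_lt_one m, rot_lt_one p])]
    have := (hmatch m hm₁ hm₂).1 (by linarith)
    linarith [rot_lt_one m]
  · -- a point just above `0` is outside `[|ψ|, 1)` but is pushed into it
    obtain ⟨m, hm₁, hm₂, hm⟩ := exists_rot_lt n i
    have hmove : rot (m + p) = rot m + rot p := by
      rw [rot_add, Int.fract_eq_self.mpr ⟨by linarith [rot_nonneg m, rot_nonneg p], by linarith⟩]
    have := (hmatch m hm₁ hm₂).2 (by linarith [rot_nonneg m])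
    linarith [goldenConj_sq_lt_abs_goldenConj]

theorem div_lt_of_period {i L p : ℕ} (hp : 0 < p)
    (hper : ∀ t, t + p < L → fibWord (i + t) = fibWord (i + t + p)) : (L : ℝ) / p < φ + 2 := by
  have hp' : (0 : ℝ) < p := by exact_mod_cast hp
  rw [div_lt_iff₀ hp']
  rcases le_or_gt L p with hLp | hpL
  · have : (L : ℝ) ≤ p := by exact_mod_cast hLp
    nlinarith [goldenRatio_pos]
  obtain ⟨n, hn⟩ : ∃ n, greatestFib p = n + 2 :=
    ⟨greatestFib p - 2, by have := Nat.le_greatestFib.mpr (show fib 2 ≤ p from hp); omega⟩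
  have h₁ : fib (n + 2) ≤ p := hn ▸ Nat.fib_greatestFib_le p
  have h₂ : p < fib (n + 3) := by
    have := Nat.lt_fib_greatestFib_add_one p; rwa [hn] at this
  have hL : (L : ℝ) + 1 ≤ p + fib (n + 4) := by exact_mod_cast length_lt_of_period h₁ h₂ hper
  have hfib := fib_add_two_sub_goldenRatio_sq_mul_fib (n + 2)
  have hψ : ψ ^ (n + 2) < 1 :=
    (le_abs_self _).trans_lt (by rw [abs_pow]; exact abs_goldenConj_pow_lt_one (by omega))
  have hφp : φ ^ 2 * fib (n + 2) ≤ φ ^ 2 * p := by gcongr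
  rw [goldenRatio_sq] at hφp hfib
  linarith

lemma rot_fib_add_lt {n r : ℕ} (hn : Even n) (hr : 0 < r) (hrn : r < fib (n + 4)) :
    rot (fib (n + 3) + r) < 1 - |ψ| ^ (n + 2) := by
  have hodd : ψ ^ (n + 3) = -|ψ| ^ (n + 3) := by
    rw [abs_goldenConj, (hn.add_odd (by decide : Odd 3)).neg_pow, neg_neg]
  rw [add_comm, rot_add_fib_of_lt (n := n + 1) hr hrn, hodd]
  have h := (rot_mem_Icc hr hrn).2
  have : |ψ| ^ (n + 2) < 2 * |ψ| ^ (n + 3) := by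
    rw [pow_succ _ (n + 2)]
    nlinarith [pow_pos abs_goldenConj_pos (n + 2), half_lt_abs_goldenConj]
  linarith

lemma fibWord_fib_add_eq_of_even {n t : ℕ} (hn : Even n) (ht : t + 2 < fib (n + 4)) :
    fibWord (fib (n + 3) + t) = fibWord (fib (n + 3) + t + fib (n + 2)) := by
  have hm : rot (fib (n + 3) + (t + 1)) < 1 - |ψ| ^ (n + 2) :=
    rot_fib_add_lt hn (by omega) (by omega)
  have hm' : rot (fib (n + 3) + (t + 1) + 1) < 1 - |ψ| ^ (n + 2) :=
    rot_fib_add_lt hn (r := t + 2) (by omega) (by omega)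
  rw [fibWord_eq_fibWord_iff, add_assoc, add_right_comm, add_assoc (fib (n + 3))]
  generalize fib (n + 3) + (t + 1) = m at hm hm' ⊢
  have hs := abs_goldenConj_add_sq
  have hε := pow_pos abs_goldenConj_pos (n + 2)
  rw [rot_add m, rot_fib_of_even hn,
    Int.fract_eq_self.mpr ⟨by linarith [rot_nonneg m], by linarith⟩]
  refine ⟨fun h => by linarith, fun h => ?_⟩
  -- otherwise `rot m ∈ [|ψ| - ε, |ψ|)`, and the next point `rot m + ψ²` would be in `[1 - ε, 1)`
  by_contra! hlt
  rw [rot_add, rot_one, Int.fract_eq_self.mpr ⟨by linarith [rot_nonneg m, goldenConj_sq_pos],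
    by linarith⟩] at hm'
  linarith

def factor (i L : ℕ) : List ℕ := (List.range L).map fun t => fibWord (i + t)

lemma length_factor (i L : ℕ) : (factor i L).length = L := by simp [factor]

lemma hasPeriod_factor_iff {i L p : ℕ} :
    HasPeriod (factor i L) p ↔
      1 ≤ p ∧ ∀ t, t + p < L → fibWord (i + t) = fibWord (i + t + p) := by
  have getD_factor {t : ℕ} (ht : t < L) : (factor i L).getD t 0 = fibWord (i + t) := by
    simp [factor, ht]
  simp only [HasPeriod, length_factor]
  refine and_congr_right fun _ => forall_congr' fun t => imp_congr_right fun ht => ?_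
  rw [getD_factor (by omega), getD_factor ht, add_assoc]

lemma exists_mem_fibExponents_ge_div {i L p : ℕ} (hL : 0 < L)
    (hp : HasPeriod (factor i L) p) :
    ∃ r ∈ fibExponents, (L : ℝ) / p ≤ r := by
  classical
  have hex : ∃ q, HasPeriod (factor i L) q := ⟨p, hp⟩
  have hmin := Nat.isLeast_find hex
  refine ⟨L / Nat.find hex, ⟨factor i L, Nat.find hex, ⟨i, by rw [length_factor]; rfl⟩,
    by rw [← List.length_pos_iff, length_factor]; exact hL, hmin, by rw [length_factor]⟩, ?_⟩
  exact div_le_div_of_nonneg_left (Nat.cast_nonneg _) (by exact_mod_cast hmin.1.1)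
    (by exact_mod_cast hmin.2 hp)

theorem lt_of_mem_fibExponents {r : ℝ} (hr : r ∈ fibExponents) : r < φ + 2 := by
  obtain ⟨x, p, ⟨i, hx⟩, -, ⟨hp, -⟩, rfl⟩ := hr
  rw [hx] at hp
  obtain ⟨hp₁, hper⟩ := hasPeriod_factor_iff.mp hp
  exact div_lt_of_period hp₁ hper

theorem exists_mem_fibExponents_ge (k : ℕ) :
    ∃ r ∈ fibExponents, φ + 2 - 3 / fib (2 * k + 2) ≤ r := by
  set n := 2 * k
  have hn : Even n := even_two_mul k
  have hF : fib (n + 4) = fib (n + 2) + fib (n + 3) := Nat.fib_add_two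
  have hF2 : 0 < fib (n + 2) := Nat.fib_pos.mpr (by omega)
  have hF3 : 0 < fib (n + 3) := Nat.fib_pos.mpr (by omega)
  have hper : HasPeriod (factor (fib (n + 3)) (fib (n + 4) + fib (n + 2) - 2)) (fib (n + 2)) :=
    hasPeriod_factor_iff.mpr ⟨hF2, fun t ht => fibWord_fib_add_eq_of_even hn (by omega)⟩
  obtain ⟨r, hr, hle⟩ := exists_mem_fibExponents_ge_div (by omega) hper
  refine ⟨r, hr, le_trans ?_ hle⟩
  have hF2' : (0 : ℝ) < fib (n + 2) := by exact_mod_cast hF2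
  have hL : ((fib (n + 4) + fib (n + 2) - 2 : ℕ) : ℝ) = fib (n + 4) + fib (n + 2) - 2 := by
    rw [Nat.cast_sub (by omega)]; push_cast; ring
  have hfib := fib_add_two_sub_goldenRatio_sq_mul_fib (n + 2)
  have hψ : -1 ≤ ψ ^ (n + 2) := by
    rw [← (hn.add even_two).pow_abs]; linarith [pow_pos abs_goldenConj_pos (n + 2)]
  rw [hL, sub_le_iff_le_add, ← add_div, le_div_iff₀ hF2']
  rw [goldenRatio_sq] at hfib
  linarith

end FibonacciWord

open FibonacciWord in
/-- The critical exponent of the Fibonacci word is 2 + α = (5 + √5)/2, and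
this supremum is not attained. -/
theorem fibWord_critical_exponent :
    IsLUB fibExponents ((5 + Real.sqrt 5) / 2) ∧
      ((5 + Real.sqrt 5) / 2) ∉ fibExponents := by
  rw [show (5 + Real.sqrt 5) / 2 = φ + 2 by rw [goldenRatio]; ring]
  refine ⟨⟨fun r hr => (lt_of_mem_fibExponents hr).le, fun b hb => ?_⟩,
    fun h => (lt_of_mem_fibExponents h).false⟩
  have hfib : Tendsto (fun k : ℕ => (fib (2 * k + 2) : ℝ)) atTop atTop :=
    tendsto_natCast_atTop_atTop.comp
      (Nat.fib_add_two_strictMono.comp (strictMono_mul_left_of_pos two_pos)).tendsto_atTop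
  have hlim : Tendsto (fun k : ℕ => φ + 2 - 3 / (fib (2 * k + 2) : ℝ)) atTop (𝓝 (φ + 2)) := by
    simpa using tendsto_const_nhds.sub (tendsto_const_nhds.div_atTop hfib)
  refine le_of_tendsto' hlim fun k => ?_
  obtain ⟨r, hr, hle⟩ := exists_mem_fibExponents_ge k
  exact hle.trans (hb hr)
end

section
/- For every n ≥ 1, the finite Fibonacci word X_n is primitive; that is, X_n cannot be written in the form z^k for any word z and integer k ≥ 2. -/
/-- The finite Fibonacci words: X_0 = ε, X_1 = 1, X_2 = 0, X_n = X_{n-1} X_{n-2}. -/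
def fibX : ℕ → List ℕ
  | 0 => []
  | 1 => [1]
  | 2 => [0]
  | n + 3 => fibX (n + 2) ++ fibX (n + 1)

lemma fibX_count0 : ∀ n : ℕ, (fibX (n + 1)).count 0 = Nat.fib n
  | 0 => rfl
  | 1 => rfl
  | n + 2 => by
    show (fibX (n + 2) ++ fibX (n + 1)).count 0 = _
    rw [List.count_append, fibX_count0 (n + 1), fibX_count0 n, Nat.fib_add_two]
    exact Nat.add_comm _ _

lemma fibX_count1 : ∀ n : ℕ, (fibX (n + 2)).count 1 = Nat.fib n
  | 0 => rfl
  | 1 => rfl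
  | n + 2 => by
    show (fibX (n + 3) ++ fibX (n + 2)).count 1 = _
    rw [List.count_append, fibX_count1 (n + 1), fibX_count1 n, Nat.fib_add_two]
    exact Nat.add_comm _ _

lemma count_replicate_flatten (a : ℕ) (k : ℕ) (z : List ℕ) :
    ((List.replicate k z).flatten).count a = k * z.count a := by
  induction k with
  | zero => simp
  | succ k ih => simp [List.replicate_succ, List.count_append, ih, Nat.succ_mul, Nat.add_comm]

/-- Every finite Fibonacci word X_n with n ≥ 1 is primitive: it is not a
k-th power for any k ≥ 2. -/
theorem fibX_primitive :
    ∀ n : ℕ, 1 ≤ n → ∀ (z : List ℕ) (k : ℕ), 2 ≤ k →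
      fibX n ≠ (List.replicate k z).flatten := by
  intro n hn z k hk h
  have hdvd : k ∣ 1 := by
    match n, hn with
    | 1, _ =>
      have h1 : (fibX 1).count 1 = k * z.count 1 := by
        rw [h, count_replicate_flatten]
      simp only [show (fibX 1).count 1 = 1 from rfl] at h1
      exact ⟨z.count 1, h1⟩
    | (m + 2), _ =>
      have h0 : Nat.fib (m + 1) = k * z.count 0 := by
        rw [← fibX_count0 (m + 1), h, count_replicate_flatten]
      have h1 : Nat.fib m = k * z.count 1 := by
        rw [← fibX_count1 m, h, count_replicate_flatten]
      have hcop : Nat.Coprime (Nat.fib m) (Nat.fib (m + 1)) :=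
        Nat.fib_coprime_fib_succ m
      exact hcop ▸ Nat.dvd_gcd ⟨z.count 1, h1⟩ ⟨z.count 0, h0⟩
  exact absurd (Nat.le_of_dvd one_pos hdvd) (by omega)
end

section
/- Let a be the sequence defined over positive-integer indices by a[i] = F_{ν₂(i)+2} for i ≥ 1, where ν₂(i) is the exponent of the largest power of 2 dividing i. Then: (1) a avoids additive squares, i.e., there are no i ≥ 1 and n ≥ 1 with Σ_{k=i}^{i+n-1} a[k] = Σ_{k=i+n}^{i+2n-1} a[k]; and (2) a is the lexicographically least sequence over the positive integers of the form S(b) that avoids additive squares, where for a sequence b = b_0 b_1 b_2 ⋯ of positive integers, S(b) is the sequence with S(b)[i] = b[ν₂(i)] for i ≥ 1. In other words, if b is any sequence of positive integers such that S(b) avoids additive squares, then the sequence (F_{i+2})_{i≥0} is lexicographically less than or equal to b. -/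
/-!
Counting multiples of powers of two gives, for any `g`,
`∑_{k ∈ (y, z]} g (ν₂ k) = (z - y) g 0 + ∑_i (g (i+1) - g i) (⌊z / 2^(i+1)⌋ - ⌊y / 2^(i+1)⌋)`.
For the two halves `(x, x + n]` and `(x + n, x + 2n]` of a candidate square, the second difference
of these floors at `2^j` is `d_j - c_j`, where `c_j` and `d_j` are the carries into bit `j` of the
binary additions `x + n` and `(x + n) + n`. For `g i = F_{i+2}` the difference of the two halves is
thus `∑_j F_j (d_j - c_j)`.

Reading bits upwards, the carry pair `(c_j, d_j)` evolves by a small automaton, and the partial sums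
`P_j = ∑_{i<j} F_i (d_i - c_i)` stay in a Fibonacci window determined by the state, and avoid `0`
when `c_j = d_j`, from the lowest set bit of `n` on. Above `x + 2n` both carries vanish, so the
total is non-zero. Conversely every value of the window is attained in the states `(0, 1)`,
`(1, 0)`, `(0, 0)`. If `b` agrees with `F_{i+2}` below `k` and `b k < F_{k+2}`, a square of `S(b)`
is obtained by choosing `x, n` in state `(0, 1)` at bit `k` with `P_k = F_{k+1} - b k`.
-/

open Finset

def carry (a b j : ℕ) : ℕ := if 2 ^ j ≤ a % 2 ^ j + b % 2 ^ j then 1 else 0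

namespace carry

lemma le_one (a b j : ℕ) : carry a b j ≤ 1 := by
  unfold carry; split <;> omega

lemma add_div_two_pow (a b j : ℕ) : (a + b) / 2 ^ j = a / 2 ^ j + b / 2 ^ j + carry a b j :=
  Nat.add_div (by positivity)

lemma succ (a b j : ℕ) :
    carry a b (j + 1) = (a / 2 ^ j % 2 + b / 2 ^ j % 2 + carry a b j) / 2 := by
  have hj := add_div_two_pow a b j
  have hj1 := add_div_two_pow a b (j + 1)
  simp only [pow_succ, ← Nat.div_div_eq_div_mul] at hj1
  have := le_one a b j
  omega

lemma add_div_two_pow_mod_two (a b j : ℕ) :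
    (a + b) / 2 ^ j % 2 = (a / 2 ^ j % 2 + b / 2 ^ j % 2 + carry a b j) % 2 := by
  rw [add_div_two_pow]; omega

lemma congr {a a' b b' j k : ℕ} (hj : j ≤ k) (ha : a ≡ a' [MOD 2 ^ k])
    (hb : b ≡ b' [MOD 2 ^ k]) : carry a b j = carry a' b' j := by
  have hd : 2 ^ j ∣ 2 ^ k := pow_dvd_pow 2 hj
  unfold carry
  rw [show a % 2 ^ j = a' % 2 ^ j from ha.of_dvd hd,
    show b % 2 ^ j = b' % 2 ^ j from hb.of_dvd hd]

lemma eq_zero_of_lt {a b j : ℕ} (h : a + b < 2 ^ j) : carry a b j = 0 :=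
  if_neg (by have := Nat.mod_le a (2 ^ j); have := Nat.mod_le b (2 ^ j); omega)

lemma eq_zero_of_dvd (a : ℕ) {b j : ℕ} (h : 2 ^ j ∣ b) : carry a b j = 0 :=
  if_neg (by rw [Nat.mod_eq_zero_of_dvd h]; have := Nat.mod_lt a (pow_pos two_pos j); omega)

end carry

def carryDiff (x n j : ℕ) : ℤ := carry (x + n) n j - carry x n j

lemma carryDiff_eq_div (x n j : ℕ) :
    carryDiff x n j = ((x + 2 * n) / 2 ^ j : ℕ) - 2 * ((x + n) / 2 ^ j : ℕ) + (x / 2 ^ j : ℕ) := by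
  have h1 := carry.add_div_two_pow x n j
  have h2 := carry.add_div_two_pow (x + n) n j
  rw [show x + n + n = x + 2 * n by ring] at h2
  rw [carryDiff, h2, h1]
  simp only [Nat.cast_add]
  ring

theorem sum_Ioc_padicValNat (g : ℕ → ℤ) {y J : ℕ} (hy : y < 2 ^ J) :
    ∑ k ∈ Ioc 0 y, g (padicValNat 2 k) =
      y * g 0 + ∑ i ∈ range J, (g (i + 1) - g i) * ((y / 2 ^ (i + 1) : ℕ) : ℤ) := by
  have telescope : ∀ k ∈ Ioc 0 y, g (padicValNat 2 k) =
      g 0 + ∑ i ∈ range J, if 2 ^ (i + 1) ∣ k then g (i + 1) - g i else 0 := by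
    intro k hk
    have hk0 : k ≠ 0 := (mem_Ioc.mp hk).1.ne'
    have hkJ : padicValNat 2 k < J := (padicValNat_le_nat_log k).trans_lt
      (Nat.log_lt_of_lt_pow hk0 ((mem_Ioc.mp hk).2.trans_lt hy))
    have : {i ∈ range J | 2 ^ (i + 1) ∣ k} = range (padicValNat 2 k) := by
      ext i
      simp only [mem_filter, mem_range, padicValNat_dvd_iff_le hk0]
      omega
    rw [← sum_filter, this, sum_range_sub]
    ring
  rw [sum_congr rfl telescope, sum_add_distrib, sum_const, Nat.card_Ioc, tsub_zero, nsmul_eq_mul,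
    sum_comm]
  congr 1
  refine sum_congr rfl fun i _ => ?_
  rw [← sum_filter, sum_const, Nat.Ioc_filter_dvd_card_eq_div, nsmul_eq_mul, mul_comm]

theorem sum_Ioc_sub_sum_Ioc_padicValNat (g : ℕ → ℤ) {x n J : ℕ} (h : x + 2 * n < 2 ^ J) :
    ∑ k ∈ Ioc (x + n) (x + 2 * n), g (padicValNat 2 k) -
      ∑ k ∈ Ioc x (x + n), g (padicValNat 2 k) =
        ∑ i ∈ range J, (g (i + 1) - g i) * carryDiff x n (i + 1) := by
  have prefix_sub {a b : ℕ} (hab : a ≤ b) : ∑ k ∈ Ioc a b, g (padicValNat 2 k) =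
      ∑ k ∈ Ioc 0 b, g (padicValNat 2 k) - ∑ k ∈ Ioc 0 a, g (padicValNat 2 k) := by
    rw [← sum_Ioc_consecutive _ (Nat.zero_le a) hab, add_sub_cancel_left]
  rw [prefix_sub (show x + n ≤ x + 2 * n by omega), prefix_sub (show x ≤ x + n by omega),
    sum_Ioc_padicValNat g h, sum_Ioc_padicValNat g (J := J) (by omega),
    sum_Ioc_padicValNat g (J := J) (by omega)]
  simp only [carryDiff_eq_div, mul_add, mul_sub, sum_add_distrib, sum_sub_distrib]
  simp only [mul_left_comm _ (2 : ℤ), ← mul_sum, Nat.cast_add, Nat.cast_mul, Nat.cast_ofNat]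
  ring

def fibSum (x n J : ℕ) : ℤ := ∑ j ∈ range J, (Nat.fib j : ℤ) * carryDiff x n j

lemma fibSum_succ (x n j : ℕ) :
    fibSum x n (j + 1) = fibSum x n j + Nat.fib j * carryDiff x n j :=
  sum_range_succ _ _

lemma fibSum_succ' (x n m : ℕ) :
    fibSum x n (m + 1) = ∑ i ∈ range m, (Nat.fib (i + 1) : ℤ) * carryDiff x n (i + 1) := by
  simp [fibSum, sum_range_succ']

lemma fibSum_congr {x x' n n' k : ℕ} (hx : x ≡ x' [MOD 2 ^ k]) (hn : n ≡ n' [MOD 2 ^ k]) :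
    fibSum x n k = fibSum x' n' k := by
  refine sum_congr rfl fun j hj => ?_
  have hj : j ≤ k := (mem_range.mp hj).le
  rw [carryDiff, carryDiff, carry.congr hj hx hn, carry.congr hj (hx.add hn) hn]

theorem sum_Ioc_fib_sub_sum_Ioc_fib {x n J : ℕ} (h : x + 2 * n < 2 ^ J) :
    ∑ k ∈ Ioc (x + n) (x + 2 * n), (Nat.fib (padicValNat 2 k + 2) : ℤ) -
      ∑ k ∈ Ioc x (x + n), (Nat.fib (padicValNat 2 k + 2) : ℤ) = fibSum x n (J + 1) := by
  rw [sum_Ioc_sub_sum_Ioc_padicValNat (fun i => (Nat.fib (i + 2) : ℤ)) h, fibSum_succ']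
  refine sum_congr rfl fun i _ => ?_
  rw [Nat.fib_add_two (n := i + 1)]
  push_cast
  ring

-- The range of `fibSum x n j` (less `0` when `c = d`) over the `x, n` for which the carries into
-- bit `j` of `x + n` and `(x + n) + n` are `c` and `d`.
def window (j : ℕ) : ℕ → ℕ → Set ℤ
  | 0, 1 => Set.Ioo (-Nat.fib j) (Nat.fib (j + 1))
  | 1, 0 => Set.Ioo (-Nat.fib (j + 1)) (Nat.fib j)
  | _, _ => Set.Ioo (-Nat.fib (j + 1)) (Nat.fib (j + 1))

-- `u` and `w` play the roles of bit `j` of `x` and of `n`.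
theorem window_step {j u w c d : ℕ} (hu : u ≤ 1) (hw : w ≤ 1) (hc : c ≤ 1) (hd : d ≤ 1) {P : ℤ}
    (hP : P ∈ window j c d) (hP0 : c = d → P ≠ 0) :
    P + Nat.fib j * ((d : ℤ) - c) ∈
        window (j + 1) ((u + w + c) / 2) (((u + w + c) % 2 + w + d) / 2) ∧
      ((u + w + c) / 2 = ((u + w + c) % 2 + w + d) / 2 → P + Nat.fib j * ((d : ℤ) - c) ≠ 0) := by
  have hF : (Nat.fib (j + 1 + 1) : ℤ) = Nat.fib j + Nat.fib (j + 1) := by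
    exact_mod_cast Nat.fib_add_two
  interval_cases u <;> interval_cases w <;> interval_cases c <;> interval_cases d <;>
    simp only [window, Set.mem_Ioo] at hP ⊢ <;> norm_num at hP0 ⊢ <;> omega

theorem exists_step_of_mem_window_succ {k c' d' : ℕ} (hcd : c' + d' ≤ 1) {v' : ℤ}
    (hv' : v' ∈ window (k + 1) c' d') :
    ∃ u w c d : ℕ, (u ≤ 1 ∧ w ≤ 1 ∧ c + d ≤ 1 ∧ (u + w + c) / 2 = c' ∧
      ((u + w + c) % 2 + w + d) / 2 = d') ∧
        ∃ v ∈ window k c d, v + Nat.fib k * ((d : ℤ) - c) = v' := by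
  have hF : (Nat.fib (k + 1 + 1) : ℤ) = Nat.fib k + Nat.fib (k + 1) := by
    exact_mod_cast Nat.fib_add_two
  have hpos : (0 : ℤ) < Nat.fib (k + 1) := by exact_mod_cast Nat.fib_pos.mpr k.succ_pos
  obtain ⟨rfl, rfl⟩ | ⟨rfl, rfl⟩ | ⟨rfl, rfl⟩ :
      (c' = 0 ∧ d' = 0) ∨ (c' = 0 ∧ d' = 1) ∨ (c' = 1 ∧ d' = 0) := by omega
  all_goals simp only [window, Set.mem_Ioo] at hv'
  · rcases lt_trichotomy v' 0 with hv | rfl | hv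
    · exact ⟨0, 0, 1, 0, by decide, v' + Nat.fib k, by simp only [window, Set.mem_Ioo]; omega,
        by push_cast; ring⟩
    · exact ⟨0, 0, 0, 0, by decide, 0, by simp only [window, Set.mem_Ioo]; omega,
        by push_cast; ring⟩
    · exact ⟨0, 0, 0, 1, by decide, v' - Nat.fib k, by simp only [window, Set.mem_Ioo]; omega,
        by push_cast; ring⟩
  · rcases le_or_gt v' 0 with hv | hv
    · exact ⟨0, 1, 0, 0, by decide, v', by simp only [window, Set.mem_Ioo]; omega,
        by push_cast; ring⟩
    · exact ⟨1, 0, 0, 1, by decide, v' - Nat.fib k, by simp only [window, Set.mem_Ioo]; omega,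
        by push_cast; ring⟩
  · rcases lt_or_ge v' 0 with hv | hv
    · exact ⟨1, 0, 1, 0, by decide, v' + Nat.fib k, by simp only [window, Set.mem_Ioo]; omega,
        by push_cast; ring⟩
    · exact ⟨1, 1, 0, 0, by decide, v', by simp only [window, Set.mem_Ioo]; omega,
        by push_cast; ring⟩

lemma div_two_pow_padicValNat_mod_two {n : ℕ} (hn : n ≠ 0) :
    n / 2 ^ padicValNat 2 n % 2 = 1 := by
  have hodd := Nat.not_dvd_ordCompl Nat.prime_two hn
  rw [Nat.factorization_def n Nat.prime_two] at hodd
  omega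

theorem fibSum_mem_window {x n : ℕ} (hn : n ≠ 0) {j : ℕ} (hj : padicValNat 2 n < j) :
    fibSum x n j ∈ window j (carry x n j) (carry (x + n) n j) ∧
      (carry x n j = carry (x + n) n j → fibSum x n j ≠ 0) := by
  induction j, hj using Nat.le_induction with
  | base =>
    set v := padicValNat 2 n
    have hdvd {i : ℕ} (hi : i ≤ v) : 2 ^ i ∣ n := (pow_dvd_pow 2 hi).trans pow_padicValNat_dvd
    have hzero : fibSum x n (v + 1) = 0 :=
      sum_eq_zero fun i hi => by
        rw [carryDiff, carry.eq_zero_of_dvd _ (hdvd (Nat.lt_succ_iff.mp (mem_range.mp hi))),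
          carry.eq_zero_of_dvd _ (hdvd (Nat.lt_succ_iff.mp (mem_range.mp hi)))]
        simp
    have hw := div_two_pow_padicValNat_mod_two hn
    rw [hzero, carry.succ, carry.succ, carry.add_div_two_pow_mod_two, hw,
      carry.eq_zero_of_dvd _ (hdvd le_rfl), carry.eq_zero_of_dvd _ (hdvd le_rfl)]
    rcases Nat.mod_two_eq_zero_or_one (x / 2 ^ v) with hu | hu <;> rw [hu] <;>
      simp only [window, Set.mem_Ioo] <;> norm_num
  | succ j hj ih =>
    rw [fibSum_succ, carryDiff, carry.succ x n, carry.succ (x + n) n,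
      carry.add_div_two_pow_mod_two]
    exact window_step (Nat.le_of_lt_succ (Nat.mod_lt _ two_pos))
      (Nat.le_of_lt_succ (Nat.mod_lt _ two_pos)) (carry.le_one _ _ _) (carry.le_one _ _ _)
      ih.1 ih.2

theorem fibSum_ne_zero {x n J : ℕ} (hn : n ≠ 0) (h : x + 2 * n < 2 ^ J) : fibSum x n J ≠ 0 :=
  (fibSum_mem_window (x := x) hn
    ((padicValNat_le_nat_log n).trans_lt (Nat.log_lt_of_lt_pow hn (by omega)))).2 <| by
    rw [carry.eq_zero_of_lt (by omega), carry.eq_zero_of_lt (by omega)]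

theorem exists_fibSum_eq (k : ℕ) {c d : ℕ} (hcd : c + d ≤ 1) {v : ℤ} (hv : v ∈ window k c d) :
    ∃ x n, x < 2 ^ k ∧ n < 2 ^ k ∧ carry x n k = c ∧ carry (x + n) n k = d ∧ fibSum x n k = v := by
  induction k generalizing c d v with
  | zero =>
    obtain ⟨rfl, rfl⟩ | ⟨rfl, rfl⟩ | ⟨rfl, rfl⟩ :
        (c = 0 ∧ d = 0) ∨ (c = 0 ∧ d = 1) ∨ (c = 1 ∧ d = 0) := by omega
    all_goals simp only [window, Set.mem_Ioo, zero_add, Nat.fib_zero, Nat.fib_one] at hv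
    · exact ⟨0, 0, by norm_num, by norm_num, rfl, rfl, by simp only [fibSum, range_zero, sum_empty]; omega⟩
    all_goals omega
  | succ k ih =>
    obtain ⟨u, w, c₀, d₀, ⟨hu, hw, hcd₀, rfl, rfl⟩, v₀, hv₀, rfl⟩ :=
      exists_step_of_mem_window_succ hcd hv
    obtain ⟨x, n, hx, hn, rfl, rfl, rfl⟩ := ih hcd₀ hv₀
    have hx' : x + u * 2 ^ k ≡ x [MOD 2 ^ k] := Nat.add_mul_mod_self_right x u _
    have hn' : n + w * 2 ^ k ≡ n [MOD 2 ^ k] := Nat.add_mul_mod_self_right n w _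
    have hxdiv : (x + u * 2 ^ k) / 2 ^ k = u := by
      rw [Nat.add_mul_div_right _ _ (by positivity), Nat.div_eq_of_lt hx, zero_add]
    have hndiv : (n + w * 2 ^ k) / 2 ^ k = w := by
      rw [Nat.add_mul_div_right _ _ (by positivity), Nat.div_eq_of_lt hn, zero_add]
    refine ⟨x + u * 2 ^ k, n + w * 2 ^ k, by rw [pow_succ]; nlinarith,
      by rw [pow_succ]; nlinarith, ?_, ?_, ?_⟩
    · rw [carry.succ, hxdiv, hndiv, carry.congr le_rfl hx' hn']
      omega
    · rw [carry.succ, carry.add_div_two_pow_mod_two, hxdiv, hndiv, carry.congr le_rfl hx' hn',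
        carry.congr le_rfl (hx'.add hn') hn']
      omega
    · rw [fibSum_succ, fibSum_congr hx' hn', carryDiff, carry.congr le_rfl hx' hn',
        carry.congr le_rfl (hx'.add hn') hn']

def HasAdditiveSquare (f : ℕ → ℕ) : Prop :=
  ∃ i : ℕ, 1 ≤ i ∧ ∃ n : ℕ, 1 ≤ n ∧
    ∑ k ∈ Ico i (i + n), f k = ∑ k ∈ Ico (i + n) (i + 2 * n), f k

lemma hasAdditiveSquare_iff_exists_Ioc {f : ℕ → ℕ} : HasAdditiveSquare f ↔
    ∃ x n : ℕ, n ≠ 0 ∧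
      ∑ k ∈ Ioc x (x + n), (f k : ℤ) = ∑ k ∈ Ioc (x + n) (x + 2 * n), (f k : ℤ) := by
  have hIoc (x n : ℕ) :
      (∑ k ∈ Ico (x + 1) (x + 1 + n), f k = ∑ k ∈ Ico (x + 1 + n) (x + 1 + 2 * n), f k) ↔
        ∑ k ∈ Ioc x (x + n), (f k : ℤ) = ∑ k ∈ Ioc (x + n) (x + 2 * n), (f k : ℤ) := by
    rw [show x + 1 + n = x + n + 1 by ring, show x + 1 + 2 * n = x + 2 * n + 1 by ring,
      Ico_add_one_add_one_eq_Ioc, Ico_add_one_add_one_eq_Ioc]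
    exact_mod_cast Iff.rfl
  constructor
  · rintro ⟨i, hi, n, hn, h⟩
    obtain ⟨x, rfl⟩ : ∃ x, i = x + 1 := ⟨i - 1, by omega⟩
    exact ⟨x, n, by omega, (hIoc x n).mp h⟩
  · rintro ⟨x, n, hn, h⟩
    exact ⟨x + 1, by omega, n, by omega, (hIoc x n).mpr h⟩

theorem not_hasAdditiveSquare_fib_padicValNat :
    ¬ HasAdditiveSquare fun k => Nat.fib (padicValNat 2 k + 2) := by
  intro h
  obtain ⟨x, n, hn, h⟩ := hasAdditiveSquare_iff_exists_Ioc.mp h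
  have hlt : x + 2 * n < 2 ^ (x + 2 * n) := Nat.lt_two_pow_self
  apply fibSum_ne_zero hn (hlt.trans (Nat.pow_lt_pow_right one_lt_two (Nat.lt_succ_self _)))
  rw [← sum_Ioc_fib_sub_sum_Ioc_fib hlt, ← h, sub_self]

theorem hasAdditiveSquare_of_lt_fib {b : ℕ → ℕ} (hb : ∀ i, 1 ≤ b i) {k : ℕ}
    (hfib : ∀ j < k, b j = Nat.fib (j + 2)) (hk : b k < Nat.fib (k + 2)) :
    HasAdditiveSquare fun i => b (padicValNat 2 i) := by
  have hk0 : k ≠ 0 := by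
    rintro rfl
    have := hb 0
    simp only [zero_add, Nat.fib_two] at hk
    omega
  have hF : Nat.fib (k + 2) = Nat.fib k + Nat.fib (k + 1) := Nat.fib_add_two
  obtain ⟨x, n, hx, hn, hc, hd, hv⟩ := exists_fibSum_eq k (c := 0) (d := 1) (by norm_num)
    (v := Nat.fib (k + 1) - b k) (by simp only [window, Set.mem_Ioo]; have := hb k; omega)
  have hxn : x + n < 2 ^ k := by
    unfold carry at hc
    rw [Nat.mod_eq_of_lt hx, Nat.mod_eq_of_lt hn] at hc
    split_ifs at hc
    omega
  have hn0 : n ≠ 0 := by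
    rintro rfl
    rw [carry.eq_zero_of_dvd _ (dvd_zero _)] at hd
    exact absurd hd zero_ne_one
  have hlt : x + 2 * n < 2 ^ (k + 1) := by rw [pow_succ]; omega
  refine hasAdditiveSquare_iff_exists_Ioc.mpr ⟨x, n, hn0, (sub_eq_zero.mp ?_).symm⟩
  rw [sum_Ioc_sub_sum_Ioc_padicValNat (fun i => (b i : ℤ)) hlt]
  have hmid : carryDiff x n k = 1 := by rw [carryDiff, hc, hd]; norm_num
  have htop : carryDiff x n (k + 1) = 0 := by
    rw [carryDiff, carry.eq_zero_of_lt (by omega), carry.eq_zero_of_lt (by omega), sub_self]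
  obtain ⟨m, rfl⟩ : ∃ m, k = m + 1 := ⟨k - 1, by omega⟩
  have hlow : ∑ i ∈ range m, ((b (i + 1) : ℤ) - b i) * carryDiff x n (i + 1) =
      fibSum x n (m + 1) := by
    rw [fibSum_succ']
    refine sum_congr rfl fun i hi => ?_
    have hi : i < m := mem_range.mp hi
    rw [hfib (i + 1) (by omega), hfib i (by omega), Nat.fib_add_two (n := i + 1)]
    push_cast
    ring
  rw [sum_range_succ, sum_range_succ, hlow, hv, hmid, htop, hfib m (by omega)]
  ring

/-- The sequence a with a[i] = F_{ν₂(i)+2} for i ≥ 1 avoids additive squares,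
and it is the lexicographically least sequence of the form S(b), over sequences
b of positive integers, that avoids additive squares: if S(b) avoids additive
squares then (F_{i+2})_{i≥0} ≤ b lexicographically. -/
theorem lexLeast_additive_square_avoidance :
    (¬ ∃ i : ℕ, 1 ≤ i ∧ ∃ n : ℕ, 1 ≤ n ∧
      ∑ k ∈ Finset.Ico i (i + n), Nat.fib (padicValNat 2 k + 2) =
        ∑ k ∈ Finset.Ico (i + n) (i + 2 * n), Nat.fib (padicValNat 2 k + 2)) ∧
    (∀ b : ℕ → ℕ, (∀ i : ℕ, 1 ≤ b i) →
      (¬ ∃ i : ℕ, 1 ≤ i ∧ ∃ n : ℕ, 1 ≤ n ∧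
        ∑ k ∈ Finset.Ico i (i + n), b (padicValNat 2 k) =
          ∑ k ∈ Finset.Ico (i + n) (i + 2 * n), b (padicValNat 2 k)) →
      ((∀ i : ℕ, Nat.fib (i + 2) = b i) ∨
        ∃ k : ℕ, (∀ j < k, Nat.fib (j + 2) = b j) ∧ Nat.fib (k + 2) < b k)) := by
  refine ⟨not_hasAdditiveSquare_fib_padicValNat, fun b hb hsq => ?_⟩
  by_cases hall : ∀ i, Nat.fib (i + 2) = b i
  · exact Or.inl hall
  rw [not_forall] at hall
  have hmin : ∀ j < Nat.find hall, Nat.fib (j + 2) = b j := fun j hj =>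
    not_not.mp (Nat.find_min hall hj)
  refine Or.inr ⟨Nat.find hall, hmin,
    lt_of_le_of_ne (not_lt.mp fun hlt => hsq ?_) (Nat.find_spec hall)⟩
  exact hasAdditiveSquare_of_lt_fib hb (fun j hj => (hmin j hj).symm) hlt
end
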